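/- arXiv:2001.03047 — 5 statements merged into one kernel-verified Lean document; each statement's English description precedes it below -/
import Mathlib

section
/- Let p ≥ 1, N ∈ ℕ, and let μ₁ and μ₂ be permutation invariant Borel probability measures on ℝ^N with finite p-th moments. Let I ⊆ {1,…,N} be nonempty with |I| < N, and let f : ℝ^{|I|} → ℝ be a bounded function that is 1-Lipschitz with respect to the ℓ^p-norm on ℝ^{|I|}. Then |∫ f∘P_I dμ₁ − ∫ f∘P_I dμ₂| ≤ (|I| / (1 − |I|/N))^{1/p} · w_p(μ₁, μ₂; N). -/
open MeasureTheory

/-- A probability measure on `ℝ^N` is permutation invariant if it is preserved by every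
coordinate permutation. -/
def PermInvariant {N : ℕ} (μ : Measure (Fin N → ℝ)) : Prop :=
  ∀ π : Equiv.Perm (Fin N), μ.map (fun x => x ∘ π) = μ

/-- The specific `p`-norm fluctuation distance `w_p(μ₁, μ₂; N)`:
the infimum over all couplings `γ` of `μ₁` and `μ₂` of
`∫ (1/N) ∑ᵢ |xᵢ - yᵢ|^p dγ`, raised to the power `1/p`. -/
noncomputable def fluctDist (p : ℝ) (N : ℕ) (μ₁ μ₂ : Measure (Fin N → ℝ)) : ℝ :=
  sInf {c : ℝ | ∃ γ : Measure ((Fin N → ℝ) × (Fin N → ℝ)), IsProbabilityMeasure γ ∧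
      γ.map Prod.fst = μ₁ ∧ γ.map Prod.snd = μ₂ ∧
      c = ∫ xy, (N : ℝ)⁻¹ * ∑ i, |xy.1 i - xy.2 i| ^ p ∂γ} ^ (1 / p)

/-- The projection `P_I : ℝ^N → ℝ^n` sending `x` to the coordinates `(x_i)_{i ∈ I}` listed in
increasing order of the original index. -/
noncomputable def projI {N n : ℕ} (I : Finset (Fin N)) (h : I.card = n)
    (x : Fin N → ℝ) (j : Fin n) : ℝ :=
  x ↑(I.orderIsoOfFin h j)

/-
Fix a coupling `γ` of `μ₁` and `μ₂` and a coordinate permutation `τ`. By permutation invariance,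
`∫ f ∘ P_I dμ₁ - ∫ f ∘ P_I dμ₂ = ∫ (f (P_I (x ∘ τ)) - f (P_I (y ∘ τ))) dγ(x, y)`, so Jensen's
inequality and the Lipschitz bound give `|Δ|^p ≤ ∑_{i ∈ I} ∫ |x_{τ i} - y_{τ i}|^p dγ`. Averaging
over the `N` cyclic shifts `τ`, every coordinate is hit exactly `|I|` times, hence
`|Δ|^p ≤ |I| · ∫ N⁻¹ ∑_i |x_i - y_i|^p dγ`, and `|I| ≤ |I| / (1 - |I| / N)`.
-/

theorem sum_sum_comp_add_right {G ι M : Type*} [AddGroup G] [Fintype G] [Fintype ι]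
    [AddCommMonoid M] (σ : ι → G) (F : G → M) :
    ∑ t, ∑ j, F (σ j + t) = Fintype.card ι • ∑ g, F g := by
  rw [Finset.sum_comm]
  have hshift (j : ι) : ∑ t, F (σ j + t) = ∑ g, F g := Equiv.sum_comp (Equiv.addLeft (σ j)) F
  simp only [hshift, Finset.sum_const, Finset.card_univ]

theorem continuous_of_abs_sub_le_sum_rpow {ι : Type*} [Fintype ι] {p : ℝ} (hp : 1 ≤ p)
    {f : (ι → ℝ) → ℝ} (hf : ∀ a b, |f a - f b| ≤ (∑ j, |a j - b j| ^ p) ^ (1 / p)) :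
    Continuous f := by
  have : Fact (1 ≤ ENNReal.ofReal p) := ⟨by simpa using hp⟩
  have hlip : LipschitzWith 1 (fun a : PiLp (ENNReal.ofReal p) (fun _ : ι => ℝ) => f a.ofLp) := by
    refine LipschitzWith.of_dist_le_mul fun a b => ?_
    rw [PiLp.dist_eq_sum (by rw [ENNReal.toReal_ofReal (by linarith)]; linarith),
      ENNReal.toReal_ofReal (by linarith)]
    simpa [Real.dist_eq] using hf a.ofLp b.ofLp
  exact hlip.continuous.comp (PiLp.continuous_toLp _ _)

theorem integrable_abs_rpow_iff_memLp {α : Type*} [MeasurableSpace α] {μ : Measure α} {p : ℝ}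
    (hp : 0 < p) {u : α → ℝ} (hu : AEStronglyMeasurable u μ) :
    Integrable (fun x => |u x| ^ p) μ ↔ MemLp u (ENNReal.ofReal p) μ := by
  have h := integrable_norm_rpow_iff hu (by simpa using hp) ENNReal.ofReal_ne_top
  rwa [ENNReal.toReal_ofReal hp.le] at h

theorem integrable_abs_sub_rpow_of_map {α : Type*} [MeasurableSpace α] {γ : Measure (α × α)}
    {μ₁ μ₂ : Measure α} (h₁ : γ.map Prod.fst = μ₁) (h₂ : γ.map Prod.snd = μ₂) {p : ℝ} (hp : 0 < p)
    {u : α → ℝ} (hu : Measurable u) (hu₁ : Integrable (fun x => |u x| ^ p) μ₁)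
    (hu₂ : Integrable (fun x => |u x| ^ p) μ₂) :
    Integrable (fun z : α × α => |u z.1 - u z.2| ^ p) γ := by
  subst h₁ h₂
  have hmem₁ := ((integrable_abs_rpow_iff_memLp hp hu.aestronglyMeasurable).1 hu₁).comp_of_map
    measurable_fst.aemeasurable
  have hmem₂ := ((integrable_abs_rpow_iff_memLp hp hu.aestronglyMeasurable).1 hu₂).comp_of_map
    measurable_snd.aemeasurable
  exact (integrable_abs_rpow_iff_memLp hp (hmem₁.sub hmem₂).1).2 (hmem₁.sub hmem₂)

theorem abs_integral_map_fst_sub_integral_map_snd_rpow_le {α : Type*} [MeasurableSpace α]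
    {γ : Measure (α × α)} [IsProbabilityMeasure γ] {p : ℝ} (hp : 1 ≤ p) {h : α → ℝ}
    (h₁ : Integrable h (γ.map Prod.fst)) (h₂ : Integrable h (γ.map Prod.snd))
    {c : α × α → ℝ} (hc : Integrable c γ) (hhc : ∀ x y, |h x - h y| ^ p ≤ c (x, y)) :
    |∫ x, h x ∂(γ.map Prod.fst) - ∫ x, h x ∂(γ.map Prod.snd)| ^ p ≤ ∫ z, c z ∂γ := by
  have h₁' : Integrable (fun z : α × α => h z.1) γ := h₁.comp_measurable measurable_fst
  have h₂' : Integrable (fun z : α × α => h z.2) γ := h₂.comp_measurable measurable_snd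
  have hd : Integrable (fun z : α × α => h z.1 - h z.2) γ := h₁'.sub h₂'
  have hdp : Integrable (fun z : α × α => |h z.1 - h z.2| ^ p) γ :=
    hc.mono' (hd.abs.1.aemeasurable.pow_const p).aestronglyMeasurable (ae_of_all _ fun z => by
      rw [Real.norm_of_nonneg (by positivity)]; exact hhc z.1 z.2)
  rw [integral_map measurable_fst.aemeasurable h₁.1, integral_map measurable_snd.aemeasurable h₂.1,
    ← integral_sub h₁' h₂']
  calc |∫ z, h z.1 - h z.2 ∂γ| ^ p ≤ (∫ z, |h z.1 - h z.2| ∂γ) ^ p := by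
        gcongr; exact abs_integral_le_integral_abs
    _ ≤ ∫ z, |h z.1 - h z.2| ^ p ∂γ :=
        (convexOn_rpow hp).map_integral_le (Real.continuous_rpow_const (by linarith)).continuousOn
          isClosed_Ici (ae_of_all _ fun z => abs_nonneg (h z.1 - h z.2)) hd.abs hdp
    _ ≤ ∫ z, c z ∂γ := integral_mono hdp hc fun z => hhc z.1 z.2

theorem PermInvariant.integral_comp {N : ℕ} {μ : Measure (Fin N → ℝ)} (hμ : PermInvariant μ)
    (τ : Equiv.Perm (Fin N)) {g : (Fin N → ℝ) → ℝ} (hg : AEStronglyMeasurable g μ) :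
    ∫ x, g (x ∘ τ) ∂μ = ∫ x, g x ∂μ := by
  conv_rhs => rw [← hμ τ]
  have hτ : Measurable fun x : Fin N → ℝ => x ∘ τ := by fun_prop
  exact (integral_map hτ.aemeasurable (by rwa [hμ τ])).symm

theorem le_rpow_mul_fluctDist {N : ℕ} {μ₁ μ₂ : Measure (Fin N → ℝ)} [IsProbabilityMeasure μ₁]
    [IsProbabilityMeasure μ₂] {p K a : ℝ} (hp : 0 < p) (hK : 0 ≤ K) (ha : 0 ≤ a)
    (h : ∀ γ : Measure ((Fin N → ℝ) × (Fin N → ℝ)), IsProbabilityMeasure γ →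
      γ.map Prod.fst = μ₁ → γ.map Prod.snd = μ₂ →
      a ^ p ≤ K * ∫ xy, (N : ℝ)⁻¹ * ∑ i, |xy.1 i - xy.2 i| ^ p ∂γ) :
    a ≤ K ^ (1 / p) * fluctDist p N μ₁ μ₂ := by
  set S : Set ℝ := {c : ℝ | ∃ γ : Measure ((Fin N → ℝ) × (Fin N → ℝ)), IsProbabilityMeasure γ ∧
      γ.map Prod.fst = μ₁ ∧ γ.map Prod.snd = μ₂ ∧
      c = ∫ xy, (N : ℝ)⁻¹ * ∑ i, |xy.1 i - xy.2 i| ^ p ∂γ}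
  have hS : S.Nonempty := ⟨_, μ₁.prod μ₂, inferInstance, by simp, by simp, rfl⟩
  have hS_nonneg : 0 ≤ sInf S := Real.sInf_nonneg <| by
    rintro c ⟨γ, -, -, -, rfl⟩
    positivity
  have hle : a ^ p ≤ K * sInf S := by
    rw [← smul_eq_mul, ← Real.sInf_smul_of_nonneg hK]
    refine le_csInf hS.smul_set ?_
    rintro _ ⟨c, ⟨γ, hγ, h₁, h₂, rfl⟩, rfl⟩
    exact h γ hγ h₁ h₂
  calc a = (a ^ p) ^ (1 / p) := by rw [← Real.rpow_mul ha, mul_one_div_cancel hp.ne', Real.rpow_one]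
    _ ≤ (K * sInf S) ^ (1 / p) := by gcongr
    _ = K ^ (1 / p) * fluctDist p N μ₁ μ₂ := Real.mul_rpow hK hS_nonneg

theorem measurable_projI {N n : ℕ} (I : Finset (Fin N)) (h : I.card = n) :
    Measurable (projI I h) :=
  measurable_pi_lambda _ fun _ => measurable_pi_apply _

section Coupling

variable {p : ℝ} {N : ℕ} {μ₁ μ₂ : Measure (Fin N → ℝ)} {I : Finset (Fin N)}
  {f : (Fin I.card → ℝ) → ℝ} {γ : Measure ((Fin N → ℝ) × (Fin N → ℝ))} [IsProbabilityMeasure γ]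

theorem abs_integral_comp_projI_sub_rpow_le_sum_perm (hp : 1 ≤ p)
    (hperm₁ : PermInvariant μ₁) (hperm₂ : PermInvariant μ₂) (hf : Measurable f)
    (hfB : ∃ C, ∀ a, |f a| ≤ C) (hfL : ∀ a b, |f a - f b| ≤ (∑ j, |a j - b j| ^ p) ^ (1 / p))
    (h₁ : γ.map Prod.fst = μ₁) (h₂ : γ.map Prod.snd = μ₂)
    (hcost : ∀ k, Integrable (fun xy : (Fin N → ℝ) × (Fin N → ℝ) => |xy.1 k - xy.2 k| ^ p) γ)
    (τ : Equiv.Perm (Fin N)) :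
    |(∫ x, f (projI I rfl x) ∂μ₁) - ∫ x, f (projI I rfl x) ∂μ₂| ^ p ≤
      ∑ j, ∫ xy, |xy.1 (τ (I.orderIsoOfFin rfl j)) - xy.2 (τ (I.orderIsoOfFin rfl j))| ^ p ∂γ := by
  obtain ⟨C, hC⟩ := hfB
  have hfP : Measurable fun x => f (projI I rfl x) := hf.comp (measurable_projI I rfl)
  let h : (Fin N → ℝ) → ℝ := fun x => f (projI I rfl (x ∘ τ))
  have hh_int (ν : Measure (Fin N → ℝ)) [IsFiniteMeasure ν] : Integrable h ν :=
    .of_bound (hfP.comp (by fun_prop)).aestronglyMeasurable C (ae_of_all _ fun x => hC _)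
  rw [← hperm₁.integral_comp τ hfP.aestronglyMeasurable,
    ← hperm₂.integral_comp τ hfP.aestronglyMeasurable, ← h₁, ← h₂,
    ← integral_finsetSum _ fun j _ => hcost _]
  refine abs_integral_map_fst_sub_integral_map_snd_rpow_le hp (hh_int _) (hh_int _)
    (integrable_finsetSum _ fun j _ => hcost _) fun x y => ?_
  calc |h x - h y| ^ p
      ≤ ((∑ j, |x (τ (I.orderIsoOfFin rfl j)) - y (τ (I.orderIsoOfFin rfl j))| ^ p) ^ (1 / p)) ^ p :=
        by gcongr; exact hfL _ _
    _ = ∑ j, |x (τ (I.orderIsoOfFin rfl j)) - y (τ (I.orderIsoOfFin rfl j))| ^ p := by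
        rw [← Real.rpow_mul (by positivity), one_div_mul_cancel (by linarith), Real.rpow_one]

theorem abs_integral_comp_projI_sub_rpow_le [NeZero N] (hp : 1 ≤ p)
    (hperm₁ : PermInvariant μ₁) (hperm₂ : PermInvariant μ₂)
    (hmom₁ : ∀ i, Integrable (fun x : Fin N → ℝ => |x i| ^ p) μ₁)
    (hmom₂ : ∀ i, Integrable (fun x : Fin N → ℝ => |x i| ^ p) μ₂) (hf : Measurable f)
    (hfB : ∃ C, ∀ a, |f a| ≤ C) (hfL : ∀ a b, |f a - f b| ≤ (∑ j, |a j - b j| ^ p) ^ (1 / p))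
    (h₁ : γ.map Prod.fst = μ₁) (h₂ : γ.map Prod.snd = μ₂) :
    |(∫ x, f (projI I rfl x) ∂μ₁) - ∫ x, f (projI I rfl x) ∂μ₂| ^ p ≤
      I.card * ∫ xy, (N : ℝ)⁻¹ * ∑ i, |xy.1 i - xy.2 i| ^ p ∂γ := by
  have hcost (k : Fin N) : Integrable (fun xy : (Fin N → ℝ) × (Fin N → ℝ) =>
      |xy.1 k - xy.2 k| ^ p) γ :=
    integrable_abs_sub_rpow_of_map h₁ h₂ (by linarith) (measurable_pi_apply k) (hmom₁ k) (hmom₂ k)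
  have hshift (t : Fin N) := abs_integral_comp_projI_sub_rpow_le_sum_perm hp hperm₁ hperm₂
    hf hfB hfL h₁ h₂ hcost (Equiv.addRight t)
  simp only [Equiv.coe_addRight] at hshift
  rw [integral_const_mul, integral_finsetSum _ fun k _ => hcost k, mul_left_comm,
    le_inv_mul_iff₀ (Nat.cast_pos.2 (NeZero.pos N))]
  calc (N : ℝ) * _ = ∑ _t : Fin N, _ := by simp
    _ ≤ _ := Finset.sum_le_sum fun t _ => hshift t
    _ = _ := (sum_sum_comp_add_right _ fun k => ∫ xy, |xy.1 k - xy.2 k| ^ p ∂γ).trans (by simp)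

end Coupling

theorem stmt0_general (p : ℝ) (hp : 1 ≤ p) (N : ℕ)
    (μ₁ μ₂ : Measure (Fin N → ℝ)) [IsProbabilityMeasure μ₁] [IsProbabilityMeasure μ₂]
    (hperm₁ : PermInvariant μ₁) (hperm₂ : PermInvariant μ₂)
    (hmom₁ : ∀ i, Integrable (fun x : Fin N → ℝ => |x i| ^ p) μ₁)
    (hmom₂ : ∀ i, Integrable (fun x : Fin N → ℝ => |x i| ^ p) μ₂)
    (I : Finset (Fin N)) (hIN : I.card < N)
    (f : (Fin I.card → ℝ) → ℝ)
    (hfB : ∃ C, ∀ a, |f a| ≤ C)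
    (hfL : ∀ a b, |f a - f b| ≤ (∑ j, |a j - b j| ^ p) ^ (1 / p)) :
    |(∫ x, f (projI I rfl x) ∂μ₁) - ∫ x, f (projI I rfl x) ∂μ₂| ≤
      ((I.card : ℝ) / (1 - (I.card : ℝ) / N)) ^ (1 / p) * fluctDist p N μ₁ μ₂ := by
  have : NeZero N := ⟨by omega⟩
  have hcard : (I.card : ℝ) ≤ I.card / (1 - I.card / N) := by
    have hN : (I.card : ℝ) < N := mod_cast hIN
    refine le_div_self (Nat.cast_nonneg _) ?_ (sub_le_self _ (by positivity))
    rw [sub_pos, div_lt_one (by linarith)]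
    exact hN
  have hf := (continuous_of_abs_sub_le_sum_rpow hp hfL).measurable
  refine le_rpow_mul_fluctDist (by linarith) ((Nat.cast_nonneg _).trans hcard) (abs_nonneg _)
    fun γ _ h₁ h₂ => ?_
  calc _ ≤ I.card * ∫ xy, (N : ℝ)⁻¹ * ∑ i, |xy.1 i - xy.2 i| ^ p ∂γ :=
        abs_integral_comp_projI_sub_rpow_le hp hperm₁ hperm₂ hmom₁ hmom₂ hf hfB hfL h₁ h₂
    _ ≤ _ := by gcongr

theorem stmt0 (p : ℝ) (hp : 1 ≤ p) (N : ℕ)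
    (μ₁ μ₂ : Measure (Fin N → ℝ)) [IsProbabilityMeasure μ₁] [IsProbabilityMeasure μ₂]
    (hperm₁ : PermInvariant μ₁) (hperm₂ : PermInvariant μ₂)
    (hmom₁ : ∀ i, Integrable (fun x : Fin N → ℝ => |x i| ^ p) μ₁)
    (hmom₂ : ∀ i, Integrable (fun x : Fin N → ℝ => |x i| ^ p) μ₂)
    (I : Finset (Fin N)) (hI : I.Nonempty) (hIN : I.card < N)
    (f : (Fin I.card → ℝ) → ℝ)
    (hfB : ∃ C, ∀ a, |f a| ≤ C)
    (hfL : ∀ a b, |f a - f b| ≤ (∑ j, |a j - b j| ^ p) ^ (1 / p)) :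
    |(∫ x, f (projI I rfl x) ∂μ₁) - ∫ x, f (projI I rfl x) ∂μ₂| ≤
      ((I.card : ℝ) / (1 - (I.card : ℝ) / N)) ^ (1 / p) * fluctDist p N μ₁ μ₂ :=
  stmt0_general p hp N μ₁ μ₂ hperm₁ hperm₂ hmom₁ hmom₂ I hIN f hfB hfL
end

section
/- Let p > 1, N ∈ ℕ, and let μ₁ and μ₂ be permutation invariant Borel probability measures on ℝ^N with finite p₀-th moments for some p₀ ≥ p. Let J be a finite sequence of elements of {1,…,N} (repetitions allowed) of length n_J, let I ⊆ {1,…,N} be the set of elements occurring in J, and assume I ≠ ∅, |I| < N and n_J ≤ p₀ + 1 − p₀/p. For x ∈ ℝ^N write x^J := Π_{ℓ=1}^{n_J} x_{J_ℓ}. Set q := p/(p−1), and let M(J,p) := 1 if n_J = 1, and otherwise M(J,p) := max over i ∈ I and over the two measures μ₁, μ₂ of (∫ |x_i|^{q(n_J−1)} dμ)^{1/(q(n_J−1))}, which is finite. Then |∫ x^J dμ₁ − ∫ x^J dμ₂| ≤ n_J · M(J,p)^{n_J−1} · (|I| / (1 − |I|/N))^{1/p} · w_p(μ₁, μ₂;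 N). -/
open MeasureTheory Finset
open scoped ENNReal

/-!
Averaging a coupling `γ` of `μ₁` and `μ₂` over the simultaneous coordinate permutations
`(x, y) ↦ (x ∘ π, y ∘ π)` gives, by permutation invariance of the marginals, again a coupling with
the same cost, under which every coordinate carries the average cost:
`∫ |x i - y i| ^ p = N⁻¹ * ∑ j, ∫ |x j - y j| ^ p`. Telescoping `x ^ J - y ^ J` writes it as a sum
of `n` products of one difference `x (J ℓ) - y (J ℓ)` with `n - 1` coordinates, and Hölder's
inequality with exponents `p` and `q (n - 1)` (where `1 / p + (n - 1) / (q (n - 1)) = 1`) bounds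
`|∫ x ^ J ∂μ₁ - ∫ x ^ J ∂μ₂|` by `n * M ^ (n - 1)` times the `p`-th root of the cost. Taking
the infimum over couplings gives the bound with `w_p` alone; the factor
`(|I| / (1 - |I| / N)) ^ (1 / p)` is at least `1`.
-/

theorem prod_sub_prod_eq_sum_prod_update {ι R : Type*} [CommRing R] [LinearOrder ι]
    (s : Finset ι) (a b : ι → R) :
    ∏ i ∈ s, a i - ∏ i ∈ s, b i =
      ∑ i ∈ s, ∏ j ∈ s, Function.update (fun j => if j < i then a j else b j) i (a i - b i) j := by
  have h := prod_add_ordered s b (a - b)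
  simp only [Pi.sub_apply, add_sub_cancel] at h
  rw [sub_eq_iff_eq_add', h]
  congr 1
  refine sum_congr rfl fun i hi => ?_
  have hlt : {j ∈ s \ {i} | j < i} = {j ∈ s | j < i} := by
    ext j; simp +contextual [ne_of_lt]
  have hgt : {j ∈ s \ {i} | ¬j < i} = {j ∈ s | i < j} := by
    ext j; simp only [mem_filter, mem_sdiff, mem_singleton, not_lt]; grind
  rw [prod_update_of_mem hi, prod_ite, hlt, hgt, mul_assoc]

theorem eLpNorm_prod_le {ι α 𝕜 : Type*} [MeasurableSpace α] [NormedCommRing 𝕜] [NormOneClass 𝕜]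
    {μ : Measure α} (s : Finset ι) {f : ι → α → 𝕜}
    (hf : ∀ i ∈ s, AEStronglyMeasurable (f i) μ) (p : ι → ℝ≥0∞) :
    eLpNorm (fun x => ∏ i ∈ s, f i x) (∑ i ∈ s, (p i)⁻¹)⁻¹ μ ≤ ∏ i ∈ s, eLpNorm (f i) (p i) μ := by
  classical
  induction s using Finset.induction_on with
  | empty => by_cases hμ : μ = 0 <;> simp [hμ, eLpNormEssSup_const]
  | insert i s hi ih =>
    simp only [prod_insert hi, sum_insert hi]
    have hs : AEStronglyMeasurable (fun x => ∏ j ∈ s, f j x) μ :=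
      Finset.aestronglyMeasurable_fun_prod s fun j hj => hf j (mem_insert_of_mem hj)
    calc eLpNorm (fun x => f i x * ∏ j ∈ s, f j x) ((p i)⁻¹ + ∑ j ∈ s, (p j)⁻¹)⁻¹ μ
        ≤ (1 : NNReal) * eLpNorm (f i) (p i) μ * eLpNorm (fun x => ∏ j ∈ s, f j x)
            (∑ j ∈ s, (p j)⁻¹)⁻¹ μ :=
          eLpNorm_le_eLpNorm_mul_eLpNorm_of_nnnorm (hf i (mem_insert_self i s)) hs (· * ·) 1
            (.of_forall fun x => by simpa using nnnorm_mul_le _ _) (hpqr := ⟨by simp⟩)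
      _ ≤ eLpNorm (f i) (p i) μ * ∏ j ∈ s, eLpNorm (f j) (p j) μ := by
          rw [ENNReal.coe_one, one_mul]
          gcongr
          exact ih fun j hj => hf j (mem_insert_of_mem hj)

theorem lintegral_enorm_prod_le {ι α 𝕜 : Type*} [MeasurableSpace α] [NormedCommRing 𝕜]
    [NormOneClass 𝕜] {μ : Measure α} [IsProbabilityMeasure μ] (s : Finset ι) {f : ι → α → 𝕜}
    (hf : ∀ i ∈ s, AEStronglyMeasurable (f i) μ) {p : ι → ℝ≥0∞} (hp : ∑ i ∈ s, (p i)⁻¹ ≤ 1) :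
    ∫⁻ x, ‖∏ i ∈ s, f i x‖ₑ ∂μ ≤ ∏ i ∈ s, eLpNorm (f i) (p i) μ := by
  rw [← eLpNorm_one_eq_lintegral_enorm]
  exact (eLpNorm_le_eLpNorm_of_exponent_le (ENNReal.one_le_inv.mpr hp)
    (Finset.aestronglyMeasurable_fun_prod s hf)).trans (eLpNorm_prod_le s hf p)

theorem lintegral_enorm_prod_sub_prod_le {ι α 𝕜 : Type*} [MeasurableSpace α] [NormedCommRing 𝕜]
    [NormOneClass 𝕜] [Fintype ι] [LinearOrder ι] {μ : Measure α} [IsProbabilityMeasure μ]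
    {X Y : ι → α → 𝕜} (hX : ∀ i, AEStronglyMeasurable (X i) μ)
    (hY : ∀ i, AEStronglyMeasurable (Y i) μ) {p r : ℝ≥0∞}
    (hpr : p⁻¹ + (Fintype.card ι - 1 : ℕ) * r⁻¹ ≤ 1) {m d : ℝ≥0∞}
    (hXm : ∀ i, eLpNorm (X i) r μ ≤ m) (hYm : ∀ i, eLpNorm (Y i) r μ ≤ m)
    (hd : ∀ i, eLpNorm (X i - Y i) p μ ≤ d) :
    ∫⁻ x, ‖∏ i, X i x - ∏ i, Y i x‖ₑ ∂μ ≤ Fintype.card ι * m ^ (Fintype.card ι - 1) * d := by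
  classical
  set F : ι → ι → α → 𝕜 := fun l => Function.update (fun j => if j < l then X j else Y j) l
    (X l - Y l)
  have hF : ∀ x, ∏ i, X i x - ∏ i, Y i x = ∑ l, ∏ j, F l j x := fun x => by
    rw [prod_sub_prod_eq_sum_prod_update]
    refine sum_congr rfl fun l _ => prod_congr rfl fun j _ => ?_
    simp only [F, Function.update_apply]
    split_ifs <;> rfl
  have hFm : ∀ l j, AEStronglyMeasurable (F l j) μ := fun l j => by
    simp only [F, Function.update_apply]
    split_ifs
    exacts [(hX l).sub (hY l), hX j, hY j]
  have hterm : ∀ l, ∫⁻ x, ‖∏ j, F l j x‖ₑ ∂μ ≤ m ^ (Fintype.card ι - 1) * d := fun l => by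
    have hcard : #({l}ᶜ : Finset ι) = Fintype.card ι - 1 := by simp [card_compl]
    calc ∫⁻ x, ‖∏ j, F l j x‖ₑ ∂μ
        ≤ ∏ j, eLpNorm (F l j) (if j = l then p else r) μ := by
          refine lintegral_enorm_prod_le _ (fun j _ => hFm l j) ?_
          rw [Fintype.sum_eq_add_sum_compl l, if_pos rfl,
            sum_congr rfl fun j hj => by rw [if_neg (by simpa using hj)], sum_const, hcard,
            nsmul_eq_mul]
          exact hpr
      _ ≤ d * m ^ (Fintype.card ι - 1) := by
          rw [Fintype.prod_eq_mul_prod_compl l, ← hcard]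
          gcongr
          · simpa [F] using hd l
          · refine prod_le_pow_card _ _ _ fun j hj => ?_
            have hjl : j ≠ l := by simpa using hj
            simp only [F, Function.update_of_ne hjl, if_neg hjl]
            split_ifs
            exacts [hXm j, hYm j]
      _ = m ^ (Fintype.card ι - 1) * d := mul_comm _ _
  calc ∫⁻ x, ‖∏ i, X i x - ∏ i, Y i x‖ₑ ∂μ
      ≤ ∫⁻ x, ∑ l, ‖∏ j, F l j x‖ₑ ∂μ :=
        lintegral_mono fun x => (hF x).symm ▸ enorm_sum_le _ _
    _ = ∑ l, ∫⁻ x, ‖∏ j, F l j x‖ₑ ∂μ :=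
        lintegral_finsetSum' _ fun l _ =>
          (Finset.aestronglyMeasurable_fun_prod _ fun j _ => hFm l j).enorm
    _ ≤ ∑ _l : ι, m ^ (Fintype.card ι - 1) * d := sum_le_sum fun l _ => hterm l
    _ = Fintype.card ι * m ^ (Fintype.card ι - 1) * d := by
        rw [sum_const, card_univ, nsmul_eq_mul, mul_assoc]

theorem enorm_integral_sub_integral_le_of_coupling {β E : Type*} [MeasurableSpace β]
    [NormedAddCommGroup E] [NormedSpace ℝ E] {μ₁ μ₂ : Measure β} {γ : Measure (β × β)}
    (h₁ : γ.map Prod.fst = μ₁) (h₂ : γ.map Prod.snd = μ₂) {f : β → E}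
    (hf₁ : Integrable f μ₁) (hf₂ : Integrable f μ₂) :
    ‖∫ x, f x ∂μ₁ - ∫ x, f x ∂μ₂‖ₑ ≤ ∫⁻ z, ‖f z.1 - f z.2‖ₑ ∂γ := by
  subst h₁ h₂
  have hf₁' : Integrable (fun z => f z.1) γ := hf₁.comp_measurable measurable_fst
  have hf₂' : Integrable (fun z => f z.2) γ := hf₂.comp_measurable measurable_snd
  rw [integral_map measurable_fst.aemeasurable hf₁.aestronglyMeasurable,
    integral_map measurable_snd.aemeasurable hf₂.aestronglyMeasurable, ← integral_sub hf₁' hf₂']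
  exact enorm_integral_le_lintegral_enorm _

theorem card_nsmul_sum_perm_apply {ι M : Type*} [Fintype ι] [DecidableEq ι] [AddCommMonoid M]
    (G : ι → M) (i : ι) :
    Fintype.card ι • ∑ π : Equiv.Perm ι, G (π i) = Fintype.card (Equiv.Perm ι) • ∑ j, G j := by
  have h : ∀ j, ∑ π : Equiv.Perm ι, G (π j) = ∑ π : Equiv.Perm ι, G (π i) := fun j =>
    Fintype.sum_equiv (Equiv.mulRight (Equiv.swap i j)) _ _ fun π => by simp
  calc Fintype.card ι • ∑ π : Equiv.Perm ι, G (π i)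
      = ∑ j, ∑ π : Equiv.Perm ι, G (π j) := by simp [h, card_univ]
    _ = ∑ π : Equiv.Perm ι, ∑ j, G (π j) := sum_comm
    _ = Fintype.card (Equiv.Perm ι) • ∑ j, G j := by
        simp [Equiv.sum_comp, card_univ]

theorem ENNReal.inv_card_mul_sum_const {ι : Type*} [Fintype ι] [Nonempty ι] (a : ℝ≥0∞) :
    (Fintype.card ι : ℝ≥0∞)⁻¹ * ∑ _i : ι, a = a := by
  rw [sum_const, card_univ, nsmul_eq_mul, ← mul_assoc,
    ENNReal.inv_mul_cancel (by simp) (by simp), one_mul]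

section Symmetrization

variable {N : ℕ}

noncomputable def permSymmetrize (γ : Measure ((Fin N → ℝ) × (Fin N → ℝ))) :
    Measure ((Fin N → ℝ) × (Fin N → ℝ)) :=
  (Fintype.card (Equiv.Perm (Fin N)) : ℝ≥0∞)⁻¹ •
    ∑ π : Equiv.Perm (Fin N), γ.map (Prod.map (· ∘ π) (· ∘ π))

theorem measurable_comp_perm (π : Equiv.Perm (Fin N)) :
    Measurable fun x : Fin N → ℝ => x ∘ π :=
  measurable_pi_lambda _ fun _ => measurable_pi_apply _

theorem lintegral_permSymmetrize (γ : Measure ((Fin N → ℝ) × (Fin N → ℝ)))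
    {f : (Fin N → ℝ) × (Fin N → ℝ) → ℝ≥0∞} (hf : Measurable f) :
    ∫⁻ z, f z ∂permSymmetrize γ = (Fintype.card (Equiv.Perm (Fin N)) : ℝ≥0∞)⁻¹ *
      ∑ π : Equiv.Perm (Fin N), ∫⁻ z, f (z.1 ∘ π, z.2 ∘ π) ∂γ := by
  rw [permSymmetrize, lintegral_smul_measure, lintegral_finsetSum_measure, smul_eq_mul]
  congr 1
  refine sum_congr rfl fun π _ => lintegral_map hf ?_
  exact (measurable_comp_perm π).prodMap (measurable_comp_perm π)

theorem map_permSymmetrize (γ : Measure ((Fin N → ℝ) × (Fin N → ℝ)))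
    {φ : (Fin N → ℝ) × (Fin N → ℝ) → Fin N → ℝ} (hφ : Measurable φ)
    (hφπ : ∀ (π : Equiv.Perm (Fin N)) z, φ (z.1 ∘ π, z.2 ∘ π) = φ z ∘ π)
    (hinv : PermInvariant (γ.map φ)) :
    (permSymmetrize γ).map φ = γ.map φ := by
  refine Measure.ext_of_lintegral _ fun f hf => ?_
  rw [lintegral_map hf hφ, lintegral_permSymmetrize γ (f := fun z => f (φ z)) (hf.comp hφ)]
  simp_rw [hφπ]
  have h : ∀ π : Equiv.Perm (Fin N), ∫⁻ z, f (φ z ∘ π) ∂γ = ∫⁻ x, f x ∂γ.map φ := fun π => by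
    rw [← hinv π, lintegral_map hf (measurable_comp_perm π),
      lintegral_map (f := fun x => f (x ∘ π)) (hf.comp (measurable_comp_perm π)) hφ]
  simp_rw [h, ENNReal.inv_card_mul_sum_const]

instance isProbabilityMeasure_permSymmetrize (γ : Measure ((Fin N → ℝ) × (Fin N → ℝ)))
    [IsProbabilityMeasure γ] : IsProbabilityMeasure (permSymmetrize γ) := by
  constructor
  simpa [ENNReal.inv_mul_cancel] using lintegral_permSymmetrize γ measurable_const (f := 1)

theorem lintegral_coord_permSymmetrize (γ : Measure ((Fin N → ℝ) × (Fin N → ℝ)))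
    {g : ℝ × ℝ → ℝ≥0∞} (hg : Measurable g) (i : Fin N) :
    ∫⁻ z, g (z.1 i, z.2 i) ∂permSymmetrize γ =
      (N : ℝ≥0∞)⁻¹ * ∑ j, ∫⁻ z, g (z.1 j, z.2 j) ∂γ := by
  set G : Fin N → ℝ≥0∞ := fun j => ∫⁻ z, g (z.1 j, z.2 j) ∂γ
  have hG := card_nsmul_sum_perm_apply G i
  rw [Fintype.card_fin, nsmul_eq_mul, nsmul_eq_mul] at hG
  have hN : (N : ℝ≥0∞) ≠ 0 := by simpa using i.pos.ne'
  rw [lintegral_permSymmetrize γ (by fun_prop)]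
  calc (Fintype.card (Equiv.Perm (Fin N)) : ℝ≥0∞)⁻¹ * ∑ π : Equiv.Perm (Fin N), G (π i)
      = (Fintype.card (Equiv.Perm (Fin N)) : ℝ≥0∞)⁻¹ *
          ((N : ℝ≥0∞)⁻¹ * (N * ∑ π : Equiv.Perm (Fin N), G (π i))) := by
        rw [← mul_assoc (N : ℝ≥0∞)⁻¹, ENNReal.inv_mul_cancel hN (by simp), one_mul]
    _ = (N : ℝ≥0∞)⁻¹ * ∑ j, G j := by
        rw [hG, mul_left_comm, ← mul_assoc _ (Fintype.card _ : ℝ≥0∞),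
          ENNReal.inv_mul_cancel (by simp) (by simp), one_mul]

end Symmetrization

theorem enorm_integral_prod_sub_le_of_coupling {N n : ℕ} {μ₁ μ₂ : Measure (Fin N → ℝ)}
    (hperm₁ : PermInvariant μ₁) (hperm₂ : PermInvariant μ₂) (J : Fin n → Fin N)
    (hJ₁ : Integrable (fun x => ∏ ℓ, x (J ℓ)) μ₁) (hJ₂ : Integrable (fun x => ∏ ℓ, x (J ℓ)) μ₂)
    {p : ℝ} (hp : 0 < p) {r m : ℝ≥0∞} (hpr : (ENNReal.ofReal p)⁻¹ + (n - 1 : ℕ) * r⁻¹ ≤ 1)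
    (hm₁ : ∀ ℓ, eLpNorm (fun x => x (J ℓ)) r μ₁ ≤ m)
    (hm₂ : ∀ ℓ, eLpNorm (fun x => x (J ℓ)) r μ₂ ≤ m)
    (γ : Measure ((Fin N → ℝ) × (Fin N → ℝ))) [IsProbabilityMeasure γ]
    (h₁ : γ.map Prod.fst = μ₁) (h₂ : γ.map Prod.snd = μ₂) :
    ‖∫ x, ∏ ℓ, x (J ℓ) ∂μ₁ - ∫ x, ∏ ℓ, x (J ℓ) ∂μ₂‖ₑ ≤
      n * m ^ (n - 1) * ((N : ℝ≥0∞)⁻¹ * ∑ i, ∫⁻ z, ‖z.1 i - z.2 i‖ₑ ^ p ∂γ) ^ (1 / p) := by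
  set ν := permSymmetrize γ
  have hν₁ : ν.map Prod.fst = μ₁ := by
    rw [map_permSymmetrize γ measurable_fst (fun _ _ => rfl) (h₁ ▸ hperm₁), h₁]
  have hν₂ : ν.map Prod.snd = μ₂ := by
    rw [map_permSymmetrize γ measurable_snd (fun _ _ => rfl) (h₂ ▸ hperm₂), h₂]
  have hmarg : ∀ {μ : Measure (Fin N → ℝ)} {φ : (Fin N → ℝ) × (Fin N → ℝ) → Fin N → ℝ},
      Measurable φ → ν.map φ = μ →
        ∀ ℓ, eLpNorm (fun z => φ z (J ℓ)) r ν = eLpNorm (fun x => x (J ℓ)) r μ :=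
    fun hφ hμ ℓ => by
      rw [← hμ, eLpNorm_map_measure (measurable_pi_apply _).aestronglyMeasurable hφ.aemeasurable]
      rfl
  calc ‖∫ x, ∏ ℓ, x (J ℓ) ∂μ₁ - ∫ x, ∏ ℓ, x (J ℓ) ∂μ₂‖ₑ
      ≤ ∫⁻ z, ‖∏ ℓ, z.1 (J ℓ) - ∏ ℓ, z.2 (J ℓ)‖ₑ ∂ν :=
        enorm_integral_sub_integral_le_of_coupling hν₁ hν₂ hJ₁ hJ₂
    _ ≤ Fintype.card (Fin n) * m ^ (Fintype.card (Fin n) - 1) *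
          ((N : ℝ≥0∞)⁻¹ * ∑ i, ∫⁻ z, ‖z.1 i - z.2 i‖ₑ ^ p ∂γ) ^ (1 / p) := by
        refine lintegral_enorm_prod_sub_prod_le (fun _ => by fun_prop) (fun _ => by fun_prop)
          (by simpa using hpr) (fun ℓ => (hmarg measurable_fst hν₁ ℓ).trans_le (hm₁ ℓ))
          (fun ℓ => (hmarg measurable_snd hν₂ ℓ).trans_le (hm₂ ℓ)) fun ℓ => ?_
        rw [eLpNorm_eq_lintegral_rpow_enorm_toReal (by simpa using hp) ENNReal.ofReal_ne_top,
          ENNReal.toReal_ofReal hp.le]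
        gcongr
        exact (lintegral_coord_permSymmetrize γ (g := fun w => ‖w.1 - w.2‖ₑ ^ p)
          (by fun_prop) (J ℓ)).le
    _ = _ := by rw [Fintype.card_fin]

theorem ofReal_inv_add_mul_inv_le_one {p : ℝ} (hp : 1 < p) (n : ℕ) :
    (ENNReal.ofReal p)⁻¹ + (n - 1 : ℕ) * (ENNReal.ofReal (p / (p - 1) * ((n : ℝ) - 1)))⁻¹ ≤ 1 := by
  have hp1 : 1 ≤ ENNReal.ofReal p := by simpa using ENNReal.ofReal_le_ofReal hp.le
  rcases n with _ | _ | n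
  · simpa using ENNReal.inv_le_one.mpr hp1
  · simpa using ENNReal.inv_le_one.mpr hp1
  · have hp0 : 0 < p - 1 := by linarith
    have hn : ((n + 2 : ℕ) : ℝ) - 1 = n + 1 := by push_cast; ring
    have hr : 0 < p / (p - 1) * (((n + 2 : ℕ) : ℝ) - 1) := by rw [hn]; positivity
    rw [← ENNReal.ofReal_inv_of_pos (by linarith), ← ENNReal.ofReal_inv_of_pos hr,
      ← ENNReal.ofReal_natCast, ← ENNReal.ofReal_mul (by positivity),
      ← ENNReal.ofReal_add (by positivity) (by positivity)]
    refine ENNReal.ofReal_le_one.mpr (le_of_eq ?_)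
    rw [hn, Nat.add_sub_cancel, Nat.cast_succ]
    field_simp
    ring

theorem memLp_of_integrable_abs_rpow {α : Type*} [MeasurableSpace α] {μ : Measure α}
    [IsFiniteMeasure μ] {f : α → ℝ} (hf : AEStronglyMeasurable f μ) {p₀ s : ℝ} (hp₀ : 0 < p₀)
    (h : Integrable (fun x => |f x| ^ p₀) μ) (hs : s ≤ p₀) : MemLp f (ENNReal.ofReal s) μ :=
  ((integrable_norm_rpow_iff hf (by simpa using hp₀) ENNReal.ofReal_ne_top).mp
    (by simpa [ENNReal.toReal_ofReal hp₀.le] using h)).mono_exponent (ENNReal.ofReal_le_ofReal hs)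

theorem integrable_prod_of_memLp_card {ι α 𝕜 : Type*} [MeasurableSpace α] [NormedCommRing 𝕜]
    [Fintype ι] {μ : Measure α} [IsFiniteMeasure μ] {f : ι → α → 𝕜}
    (hf : ∀ i, MemLp (f i) (Fintype.card ι) μ) : Integrable (fun x => ∏ i, f i x) μ := by
  rw [← memLp_one_iff_integrable]
  refine (MemLp.prod' fun i _ => hf i).mono_exponent ?_
  rw [sum_const, card_univ, nsmul_eq_mul, ENNReal.one_le_inv]
  exact ENNReal.mul_inv_le_one _

theorem eLpNorm_le_ofReal_of_integral_rpow_le {α : Type*} [MeasurableSpace α] {μ : Measure α}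
    {f : α → ℝ} {r M : ℝ} (hf : MemLp f (ENNReal.ofReal r) μ)
    (hM : 0 < r → (∫ x, |f x| ^ r ∂μ) ^ (1 / r) ≤ M) :
    eLpNorm f (ENNReal.ofReal r) μ ≤ ENNReal.ofReal M := by
  rcases le_or_gt r 0 with hr | hr
  · simp [ENNReal.ofReal_of_nonpos hr]
  · rw [hf.eLpNorm_eq_integral_rpow_norm (by simpa using hr) ENNReal.ofReal_ne_top,
      ENNReal.toReal_ofReal hr.le]
    exact ENNReal.ofReal_le_ofReal (by simpa using hM hr)

theorem ofReal_integral_cost_eq {N : ℕ} {p : ℝ} (hp : 0 < p) {μ₁ μ₂ : Measure (Fin N → ℝ)}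
    {γ : Measure ((Fin N → ℝ) × (Fin N → ℝ))} (h₁ : γ.map Prod.fst = μ₁)
    (h₂ : γ.map Prod.snd = μ₂) (hX₁ : ∀ i, MemLp (fun x => x i) (ENNReal.ofReal p) μ₁)
    (hX₂ : ∀ i, MemLp (fun x => x i) (ENNReal.ofReal p) μ₂) :
    ENNReal.ofReal (∫ z, (N : ℝ)⁻¹ * ∑ i, |z.1 i - z.2 i| ^ p ∂γ) =
      (N : ℝ≥0∞)⁻¹ * ∑ i, ∫⁻ z, ‖z.1 i - z.2 i‖ₑ ^ p ∂γ := by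
  have hint : ∀ i, Integrable (fun z => |z.1 i - z.2 i| ^ p) γ := fun i => by
    have h := (((h₁ ▸ hX₁ i).comp_of_map measurable_fst.aemeasurable).sub
      ((h₂ ▸ hX₂ i).comp_of_map measurable_snd.aemeasurable)).integrable_norm_rpow
      (by simpa using hp) ENNReal.ofReal_ne_top
    simpa [ENNReal.toReal_ofReal hp.le] using h
  rw [ofReal_integral_eq_lintegral_ofReal ((integrable_finsetSum _ fun i _ => hint i).const_mul _)
    (ae_of_all _ fun z => by positivity), ← lintegral_finsetSum' _ fun i _ => by fun_prop,
    ← lintegral_const_mul _ (by fun_prop)]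
  refine lintegral_congr fun z => ?_
  rcases N.eq_zero_or_pos with rfl | hN
  · simp
  rw [ENNReal.ofReal_mul (by positivity), ENNReal.ofReal_inv_of_pos (by positivity),
    ENNReal.ofReal_natCast, ENNReal.ofReal_sum_of_nonneg fun i _ => by positivity]
  simp_rw [Real.enorm_eq_ofReal_abs, ENNReal.ofReal_rpow_of_nonneg (abs_nonneg _) hp.le]

theorem abs_integral_prod_sub_le_of_coupling {N n : ℕ} {p p₀ : ℝ} (hp : 1 < p) (hpp₀ : p ≤ p₀)
    {μ₁ μ₂ : Measure (Fin N → ℝ)} [IsProbabilityMeasure μ₁] [IsProbabilityMeasure μ₂]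
    (hperm₁ : PermInvariant μ₁) (hperm₂ : PermInvariant μ₂)
    (hmom₁ : ∀ i, Integrable (fun x : Fin N → ℝ => |x i| ^ p₀) μ₁)
    (hmom₂ : ∀ i, Integrable (fun x : Fin N → ℝ => |x i| ^ p₀) μ₂)
    (J : Fin n → Fin N) (hn : (n : ℝ) ≤ p₀ + 1 - p₀ / p) {M : ℝ} (hM : 0 ≤ M)
    (hM₁ : ∀ ℓ, n ≠ 1 → (∫ x, |x (J ℓ)| ^ (p / (p - 1) * ((n : ℝ) - 1)) ∂μ₁) ^
      (1 / (p / (p - 1) * ((n : ℝ) - 1))) ≤ M)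
    (hM₂ : ∀ ℓ, n ≠ 1 → (∫ x, |x (J ℓ)| ^ (p / (p - 1) * ((n : ℝ) - 1)) ∂μ₂) ^
      (1 / (p / (p - 1) * ((n : ℝ) - 1))) ≤ M)
    (γ : Measure ((Fin N → ℝ) × (Fin N → ℝ))) [IsProbabilityMeasure γ]
    (h₁ : γ.map Prod.fst = μ₁) (h₂ : γ.map Prod.snd = μ₂) :
    |∫ x, ∏ ℓ, x (J ℓ) ∂μ₁ - ∫ x, ∏ ℓ, x (J ℓ) ∂μ₂| ≤
      n * M ^ (n - 1) * (∫ z, (N : ℝ)⁻¹ * ∑ i, |z.1 i - z.2 i| ^ p ∂γ) ^ (1 / p) := by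
  have hp0 : 0 < p := by linarith
  have hp₀ : 0 < p₀ := by linarith
  have hnp₀ : (n : ℝ) ≤ p₀ := by
    have := (one_le_div hp0).mpr hpp₀
    linarith
  have hrp₀ : p / (p - 1) * ((n : ℝ) - 1) ≤ p₀ := by
    rw [div_mul_eq_mul_div, div_le_iff₀ (by linarith)]
    have := mul_le_mul_of_nonneg_right hn hp0.le
    rw [sub_mul, add_mul, div_mul_cancel₀ _ hp0.ne'] at this
    nlinarith
  have hLp : ∀ {μ : Measure (Fin N → ℝ)} [IsProbabilityMeasure μ],
      (∀ i, Integrable (fun x : Fin N → ℝ => |x i| ^ p₀) μ) →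
      ∀ {s : ℝ}, s ≤ p₀ → ∀ i, MemLp (fun x => x i) (ENNReal.ofReal s) μ :=
    fun hmom _ hs i =>
      memLp_of_integrable_abs_rpow (measurable_pi_apply i).aestronglyMeasurable hp₀ (hmom i) hs
  have hJ : ∀ {μ : Measure (Fin N → ℝ)} [IsProbabilityMeasure μ],
      (∀ i, Integrable (fun x : Fin N → ℝ => |x i| ^ p₀) μ) →
      Integrable (fun x => ∏ ℓ, x (J ℓ)) μ :=
    fun hmom => integrable_prod_of_memLp_card fun ℓ => by simpa using hLp hmom hnp₀ (J ℓ)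
  -- for `n = 1` the exponent `p / (p - 1) * (n - 1)` is `0`, and the moment bounds are vacuous
  have hn1 : 0 < p / (p - 1) * ((n : ℝ) - 1) → n ≠ 1 := by
    rintro hr rfl
    simp at hr
  have h := enorm_integral_prod_sub_le_of_coupling hperm₁ hperm₂ J (hJ hmom₁) (hJ hmom₂) hp0
    (ofReal_inv_add_mul_inv_le_one hp n)
    (fun ℓ => eLpNorm_le_ofReal_of_integral_rpow_le (hLp hmom₁ hrp₀ _) fun hr => hM₁ ℓ (hn1 hr))
    (fun ℓ => eLpNorm_le_ofReal_of_integral_rpow_le (hLp hmom₂ hrp₀ _) fun hr => hM₂ ℓ (hn1 hr))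
    γ h₁ h₂
  have hc : 0 ≤ ∫ z, (N : ℝ)⁻¹ * ∑ i, |z.1 i - z.2 i| ^ p ∂γ :=
    integral_nonneg fun z => by positivity
  rw [← ofReal_integral_cost_eq hp0 h₁ h₂ (hLp hmom₁ hpp₀) (hLp hmom₂ hpp₀),
    Real.enorm_eq_ofReal_abs, ENNReal.ofReal_rpow_of_nonneg hc (by positivity),
    ← ENNReal.ofReal_pow hM, ← ENNReal.ofReal_natCast, ← ENNReal.ofReal_mul (by positivity),
    ← ENNReal.ofReal_mul (by positivity)] at h
  exact (ENNReal.ofReal_le_ofReal_iff (by positivity)).mp h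

theorem le_mul_sInf_rpow {S : Set ℝ} (hS : S.Nonempty) (hS0 : ∀ c ∈ S, 0 ≤ c) {p D K : ℝ}
    (hp : 0 < p) (hK : 0 ≤ K) (h : ∀ c ∈ S, D ≤ K * c ^ (1 / p)) : D ≤ K * sInf S ^ (1 / p) := by
  rcases le_or_gt D 0 with hD | hD
  · exact hD.trans (mul_nonneg hK (Real.rpow_nonneg (le_csInf hS hS0) _))
  obtain ⟨c₀, hc₀⟩ := hS
  have hK0 : 0 < K := by
    by_contra! hK0
    have := h c₀ hc₀
    nlinarith [Real.rpow_nonneg (hS0 c₀ hc₀) (1 / p)]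
  rw [← div_le_iff₀' hK0, one_div, Real.le_rpow_inv_iff_of_pos (by positivity)
    (le_csInf ⟨c₀, hc₀⟩ hS0) hp]
  refine le_csInf ⟨c₀, hc₀⟩ fun c hc => ?_
  rw [← Real.le_rpow_inv_iff_of_pos (by positivity) (hS0 c hc) hp, ← one_div,
    div_le_iff₀' hK0]
  exact h c hc

theorem le_mul_fluctDist {N : ℕ} {μ₁ μ₂ : Measure (Fin N → ℝ)} [IsProbabilityMeasure μ₁]
    [IsProbabilityMeasure μ₂] {p D K : ℝ} (hp : 0 < p) (hK : 0 ≤ K)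
    (h : ∀ γ : Measure ((Fin N → ℝ) × (Fin N → ℝ)), IsProbabilityMeasure γ →
      γ.map Prod.fst = μ₁ → γ.map Prod.snd = μ₂ →
      D ≤ K * (∫ z, (N : ℝ)⁻¹ * ∑ i, |z.1 i - z.2 i| ^ p ∂γ) ^ (1 / p)) :
    D ≤ K * fluctDist p N μ₁ μ₂ := by
  unfold fluctDist
  refine le_mul_sInf_rpow ?_ ?_ hp hK ?_
  · exact ⟨_, μ₁.prod μ₂, inferInstance, by simp, by simp, rfl⟩
  · rintro c ⟨γ, -, -, -, rfl⟩
    exact integral_nonneg fun z => by positivity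
  · rintro c ⟨γ, hγ, h₁, h₂, rfl⟩
    exact h γ hγ h₁ h₂

theorem fluctDist_nonneg {N : ℕ} {μ₁ μ₂ : Measure (Fin N → ℝ)} [IsProbabilityMeasure μ₁]
    [IsProbabilityMeasure μ₂] {p : ℝ} (hp : 0 < p) : 0 ≤ fluctDist p N μ₁ μ₂ := by
  simpa using le_mul_fluctDist hp zero_le_one fun γ _ _ _ => by positivity

theorem one_le_div_one_sub_div_rpow {k N : ℕ} (hk : 0 < k) (hkN : k < N) {q : ℝ} (hq : 0 ≤ q) :
    1 ≤ ((k : ℝ) / (1 - k / N)) ^ q := by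
  have hN : (0 : ℝ) < N := by exact_mod_cast hk.trans hkN
  have hkN' : (k : ℝ) / N < 1 := (div_lt_one hN).mpr (by exact_mod_cast hkN)
  have hk' : (1 : ℝ) ≤ k := by exact_mod_cast hk
  have : (0 : ℝ) ≤ k / N := by positivity
  refine Real.one_le_rpow ?_ hq
  rw [one_le_div (by linarith)]
  linarith

theorem stmt1 (p p₀ : ℝ) (hp : 1 < p) (hpp₀ : p ≤ p₀) (N n : ℕ)
    (μ₁ μ₂ : Measure (Fin N → ℝ)) [IsProbabilityMeasure μ₁] [IsProbabilityMeasure μ₂]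
    (hperm₁ : PermInvariant μ₁) (hperm₂ : PermInvariant μ₂)
    (hmom₁ : ∀ i, Integrable (fun x : Fin N → ℝ => |x i| ^ p₀) μ₁)
    (hmom₂ : ∀ i, Integrable (fun x : Fin N → ℝ => |x i| ^ p₀) μ₂)
    -- `J` is a finite sequence of elements of `{1,…,N}` of length `n = n_J`,
    -- and `I` is the set of elements occurring in `J`
    (J : Fin n → Fin N)
    (hI : (Finset.image J Finset.univ).Nonempty)
    (hIN : (Finset.image J Finset.univ).card < N)
    (hn : (n : ℝ) ≤ p₀ + 1 - p₀ / p)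
    (M : ℝ)
    (hM : M = if n = 1 then 1 else
      (Finset.image J Finset.univ).sup' hI fun i =>
        max ((∫ x, |x i| ^ (p / (p - 1) * ((n : ℝ) - 1)) ∂μ₁) ^
              (1 / (p / (p - 1) * ((n : ℝ) - 1))))
            ((∫ x, |x i| ^ (p / (p - 1) * ((n : ℝ) - 1)) ∂μ₂) ^
              (1 / (p / (p - 1) * ((n : ℝ) - 1))))) :
    |(∫ x, ∏ ℓ, x (J ℓ) ∂μ₁) - ∫ x, ∏ ℓ, x (J ℓ) ∂μ₂| ≤
      (n : ℝ) * M ^ (n - 1) *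
        (((Finset.image J Finset.univ).card : ℝ) /
            (1 - ((Finset.image J Finset.univ).card : ℝ) / N)) ^ (1 / p) *
        fluctDist p N μ₁ μ₂ := by
  have hMle : ∀ ℓ, n ≠ 1 →
      (∫ x, |x (J ℓ)| ^ (p / (p - 1) * ((n : ℝ) - 1)) ∂μ₁) ^
          (1 / (p / (p - 1) * ((n : ℝ) - 1))) ≤ M ∧
      (∫ x, |x (J ℓ)| ^ (p / (p - 1) * ((n : ℝ) - 1)) ∂μ₂) ^
          (1 / (p / (p - 1) * ((n : ℝ) - 1))) ≤ M := fun ℓ hn1 => by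
    rw [hM, if_neg hn1]
    have hℓ := mem_image_of_mem J (mem_univ ℓ)
    exact ⟨le_sup'_of_le _ hℓ (le_max_left _ _), le_sup'_of_le _ hℓ (le_max_right _ _)⟩
  have hM0 : 0 ≤ M := by
    rw [hM]
    split_ifs
    · exact zero_le_one
    · obtain ⟨i, hi⟩ := hI
      exact le_sup'_of_le _ hi
        ((Real.rpow_nonneg (integral_nonneg fun _ => by positivity) _).trans (le_max_left _ _))
  have hp0 : 0 < p := by linarith
  have hK : 0 ≤ (n : ℝ) * M ^ (n - 1) := mul_nonneg (Nat.cast_nonneg n) (pow_nonneg hM0 _)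
  have hw := fluctDist_nonneg (μ₁ := μ₁) (μ₂ := μ₂) (N := N) hp0
  calc |(∫ x, ∏ ℓ, x (J ℓ) ∂μ₁) - ∫ x, ∏ ℓ, x (J ℓ) ∂μ₂|
      ≤ n * M ^ (n - 1) * fluctDist p N μ₁ μ₂ :=
        le_mul_fluctDist hp0 hK fun γ _ h₁ h₂ =>
          abs_integral_prod_sub_le_of_coupling hp hpp₀ hperm₁ hperm₂ hmom₁ hmom₂ J hn hM0
            (fun ℓ h => (hMle ℓ h).1) (fun ℓ h => (hMle ℓ h).2) γ h₁ h₂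
    _ = n * M ^ (n - 1) * 1 * fluctDist p N μ₁ μ₂ := by rw [mul_one]
    _ ≤ _ := by
        gcongr
        exact one_le_div_one_sub_div_rpow hI.card_pos hIN (by positivity)
end

section
/- Let p ≥ 1 and N ∈ ℕ. Let (μ^{ε'})_{ε'∈ℝ} be a Markov kernel from ℝ to ℝ^N such that each μ^{ε'} is a permutation invariant probability measure with finite p-th moments, let ν be a Borel probability measure on ℝ with finite second moment, and let μ_C := ∫ μ^{ε'} ν(dε') be the corresponding mixture measure on ℝ^N. Fix ε ∈ ℝ and C > 0, and assume that w_p(μ^{ε}, μ^{ε'}; N) ≤ C·|ε − ε'| for ν-almost every ε'. Then for every nonempty I ⊆ {1,…,N} with |I| < N and every bounded function f : ℝ^{|I|} → ℝ that is 1-Lipschitz with respect to the ℓ^p-norm, |∫ f∘P_I dμ^{ε} − ∫ f∘P_I dμ_C| ≤ C · (|I| / (1 − |I|/N))^{1/p} · ( σ(ν) + |ε − m(ν)| ), where m(ν) := ∫ ε' ν(dε') is the mean of ν and σ(ν) := (∫ (ε' − m(ν))² ν(dε'))^{1/2} is its standard deviation. -/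
open MeasureTheory

/-!
The cyclic shifts `i ↦ i + k` of the coordinates preserve both permutation-invariant measures, so
for any coupling the Lipschitz bound on the window `I` may be replaced by its average over the
shifted windows `I + k`, which is `|I| / N` times the full transport cost; with Jensen's inequality
for `t ↦ t ^ p` this gives `|∫ f ∘ P_I dμ₁ - ∫ f ∘ P_I dμ₂| ≤ |I| ^ (1/p) * w_p(μ₁, μ₂; N)`.
Integrating against `ν`, bounding `∫ |ε - ε'| dν ≤ σ(ν) + |ε - m(ν)|` by Jensen again, and using
`(1 - |I| / N) ^ (-1/p) ≥ 1` yields the claim.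
-/

open ProbabilityTheory

theorem continuous_of_abs_sub_le_lpDist {p : ℝ} (hp : 1 ≤ p) {n : ℕ} {f : (Fin n → ℝ) → ℝ}
    (hf : ∀ a b, |f a - f b| ≤ (∑ j, |a j - b j| ^ p) ^ (1 / p)) : Continuous f := by
  have : Fact (1 ≤ ENNReal.ofReal p) := ⟨by simpa using hp⟩
  have hp' : (ENNReal.ofReal p).toReal = p := ENNReal.toReal_ofReal (by linarith)
  have hL : LipschitzWith 1 fun x : PiLp (ENNReal.ofReal p) (fun _ : Fin n => ℝ) => f x.ofLp :=
    LipschitzWith.of_dist_le_mul fun a b => by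
      simpa [PiLp.dist_eq_sum (hp'.symm ▸ (by linarith : 0 < p)), Real.dist_eq, hp']
        using hf a.ofLp b.ofLp
  exact hL.continuous.comp (PiLp.continuous_toLp _ _)

theorem abs_integral_rpow_le_integral_abs_rpow {α : Type*} [MeasurableSpace α] {μ : Measure α}
    [IsProbabilityMeasure μ] {p : ℝ} (hp : 1 ≤ p) {g : α → ℝ} (hg : Integrable g μ)
    (hgp : Integrable (fun x => |g x| ^ p) μ) :
    |∫ x, g x ∂μ| ^ p ≤ ∫ x, |g x| ^ p ∂μ :=
  calc |∫ x, g x ∂μ| ^ p ≤ (∫ x, |g x| ∂μ) ^ p :=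
        Real.rpow_le_rpow (abs_nonneg _) (abs_integral_le_integral_abs) (by linarith)
    _ ≤ ∫ x, |g x| ^ p ∂μ :=
        (convexOn_rpow hp).map_integral_le (Real.continuous_rpow_const (by linarith)).continuousOn
          isClosed_Ici (.of_forall fun x => abs_nonneg (g x)) hg.abs hgp

section Coupling

variable {X : Type*} [MeasurableSpace X] {μ₁ μ₂ : Measure X} {γ : Measure (X × X)}

theorem integrable_abs_sub_rpow_of_coupling (h₁ : γ.map Prod.fst = μ₁)
    (h₂ : γ.map Prod.snd = μ₂) {p : ℝ} (hp : 0 < p) {u : X → ℝ} (hu : Measurable u)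
    (hu₁ : Integrable (fun x => |u x| ^ p) μ₁) (hu₂ : Integrable (fun x => |u x| ^ p) μ₂) :
    Integrable (fun xy : X × X => |u xy.1 - u xy.2| ^ p) γ := by
  subst h₁ h₂
  have hq : ENNReal.ofReal p ≠ 0 := by simpa using hp
  have hpq : (ENNReal.ofReal p).toReal = p := ENNReal.toReal_ofReal hp.le
  have memLp : ∀ {π : X × X → X}, Measurable π → Integrable (fun x => |u x| ^ p) (γ.map π) →
      MemLp (fun xy => u (π xy)) (ENNReal.ofReal p) γ := fun hπ h =>
    (memLp_map_measure_iff hu.aestronglyMeasurable hπ.aemeasurable).1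
      ((integrable_norm_rpow_iff hu.aestronglyMeasurable hq ENNReal.ofReal_ne_top).1
        (by simpa [hpq] using h))
  simpa [hpq] using ((memLp measurable_fst hu₁).sub (memLp measurable_snd hu₂)).integrable_norm_rpow
    hq ENNReal.ofReal_ne_top

theorem abs_integral_sub_rpow_le_of_coupling [IsProbabilityMeasure γ] (h₁ : γ.map Prod.fst = μ₁)
    (h₂ : γ.map Prod.snd = μ₂) {p : ℝ} (hp : 1 ≤ p) {G : X → ℝ} (hG : Measurable G) {B : ℝ}
    (hGB : ∀ x, |G x| ≤ B) :
    |∫ x, G x ∂μ₁ - ∫ x, G x ∂μ₂| ^ p ≤ ∫ xy, |G xy.1 - G xy.2| ^ p ∂γ := by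
  subst h₁ h₂
  have hΔB : ∀ xy : X × X, |G xy.1 - G xy.2| ≤ 2 * B := fun xy =>
    (abs_sub _ _).trans (by linarith [hGB xy.1, hGB xy.2])
  have hG₁ : Integrable (fun xy : X × X => G xy.1) γ :=
    .of_bound (hG.comp measurable_fst).aestronglyMeasurable B (.of_forall fun xy => hGB xy.1)
  have hG₂ : Integrable (fun xy : X × X => G xy.2) γ :=
    .of_bound (hG.comp measurable_snd).aestronglyMeasurable B (.of_forall fun xy => hGB xy.2)
  have hΔp : Integrable (fun xy : X × X => |G xy.1 - G xy.2| ^ p) γ := by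
    have hΔ : Measurable fun xy : X × X => |G xy.1 - G xy.2| ^ p :=
      ((hG.comp measurable_fst).sub (hG.comp measurable_snd)).abs.pow_const p
    refine .of_bound hΔ.aestronglyMeasurable ((2 * B) ^ p) (.of_forall fun xy => ?_)
    rw [Real.norm_eq_abs, abs_of_nonneg (by positivity)]
    exact Real.rpow_le_rpow (abs_nonneg _) (hΔB xy) (by linarith)
  rw [integral_map measurable_fst.aemeasurable hG.aestronglyMeasurable,
    integral_map measurable_snd.aemeasurable hG.aestronglyMeasurable, ← integral_sub hG₁ hG₂]
  exact abs_integral_rpow_le_integral_abs_rpow hp (hG₁.sub hG₂) hΔp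

end Coupling

theorem sum_sum_add_eq_card_smul_sum {G ι M : Type*} [AddGroup G] [Fintype G] [Fintype ι]
    [AddCommMonoid M] (e : ι → G) (a : G → M) :
    ∑ k, ∑ j, a (e j + k) = Fintype.card ι • ∑ g, a g := by
  rw [Finset.sum_comm]
  calc ∑ j, ∑ k, a (e j + k) = ∑ _j : ι, ∑ g, a g :=
        Finset.sum_congr rfl fun j _ => Equiv.sum_comp (Equiv.addLeft (e j)) a
    _ = Fintype.card ι • ∑ g, a g := by simp

section Projection

variable {p : ℝ} {N : ℕ} {μ₁ μ₂ : Measure (Fin N → ℝ)} {γ : Measure ((Fin N → ℝ) × (Fin N → ℝ))}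
  {I : Finset (Fin N)} {f : (Fin I.card → ℝ) → ℝ} {B : ℝ}

theorem abs_integral_projI_sub_rpow_le_integral_shift [NeZero N] [IsProbabilityMeasure γ]
    (hp : 1 ≤ p) (h₁ : PermInvariant μ₁) (h₂ : PermInvariant μ₂) (hγ₁ : γ.map Prod.fst = μ₁)
    (hγ₂ : γ.map Prod.snd = μ₂) (hc : ∀ i, Integrable (fun xy => |xy.1 i - xy.2 i| ^ p) γ)
    (hfB : ∀ a, |f a| ≤ B) (hfL : ∀ a b, |f a - f b| ≤ (∑ j, |a j - b j| ^ p) ^ (1 / p))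
    (k : Fin N) :
    |∫ x, f (projI I rfl x) ∂μ₁ - ∫ x, f (projI I rfl x) ∂μ₂| ^ p ≤
      ∫ xy, ∑ j, |xy.1 (I.orderIsoOfFin rfl j + k) - xy.2 (I.orderIsoOfFin rfl j + k)| ^ p ∂γ := by
  have hF : Continuous fun x => f (projI I rfl x) :=
    (continuous_of_abs_sub_le_lpDist hp hfL).comp (continuous_pi fun j => continuous_apply _)
  have hπ : Continuous fun x : Fin N → ℝ => x ∘ Equiv.addRight k :=
    continuous_pi fun j => continuous_apply _
  set G : (Fin N → ℝ) → ℝ := fun x => f (projI I rfl (x ∘ Equiv.addRight k))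
  have hinv : ∀ {μ}, PermInvariant μ → ∫ x, f (projI I rfl x) ∂μ = ∫ x, G x ∂μ := by
    intro μ h
    conv_lhs => rw [← h (Equiv.addRight k)]
    exact integral_map hπ.aemeasurable hF.aestronglyMeasurable
  rw [hinv h₁, hinv h₂]
  refine (abs_integral_sub_rpow_le_of_coupling hγ₁ hγ₂ hp (hF.comp hπ).measurable
    fun x => hfB _).trans (integral_mono_of_nonneg (.of_forall fun _ => by positivity) ?_
      (.of_forall fun xy => ?_))
  · exact integrable_finsetSum _ fun j _ => hc _
  · exact (Real.le_rpow_inv_iff_of_pos (abs_nonneg _) (by positivity) (by linarith)).1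
      (by rw [← one_div]; exact hfL _ _)

theorem abs_integral_projI_sub_rpow_le_card_mul_integral (hp : 1 ≤ p) (hN : 0 < N)
    (h₁ : PermInvariant μ₁) (h₂ : PermInvariant μ₂)
    (hm₁ : ∀ i, Integrable (fun x : Fin N → ℝ => |x i| ^ p) μ₁)
    (hm₂ : ∀ i, Integrable (fun x : Fin N → ℝ => |x i| ^ p) μ₂) [IsProbabilityMeasure γ]
    (hγ₁ : γ.map Prod.fst = μ₁) (hγ₂ : γ.map Prod.snd = μ₂) (hfB : ∀ a, |f a| ≤ B)
    (hfL : ∀ a b, |f a - f b| ≤ (∑ j, |a j - b j| ^ p) ^ (1 / p)) :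
    |∫ x, f (projI I rfl x) ∂μ₁ - ∫ x, f (projI I rfl x) ∂μ₂| ^ p ≤
      I.card * ∫ xy, (N : ℝ)⁻¹ * ∑ i, |xy.1 i - xy.2 i| ^ p ∂γ := by
  have : NeZero N := ⟨hN.ne'⟩
  set D := ∫ x, f (projI I rfl x) ∂μ₁ - ∫ x, f (projI I rfl x) ∂μ₂
  set e : Fin I.card → Fin N := fun j => I.orderIsoOfFin rfl j
  set c : Fin N → (Fin N → ℝ) × (Fin N → ℝ) → ℝ := fun i xy => |xy.1 i - xy.2 i| ^ p
  have hc : ∀ i, Integrable (c i) γ := fun i =>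
    integrable_abs_sub_rpow_of_coupling hγ₁ hγ₂ (by linarith) (measurable_pi_apply i) (hm₁ i)
      (hm₂ i)
  have hsum : N * |D| ^ p ≤ N * (I.card * ∫ xy, (N : ℝ)⁻¹ * ∑ i, c i xy ∂γ) :=
    calc N * |D| ^ p = ∑ k : Fin N, |D| ^ p := by simp
      _ ≤ ∑ k : Fin N, ∫ xy, ∑ j, c (e j + k) xy ∂γ := Finset.sum_le_sum fun k _ =>
        abs_integral_projI_sub_rpow_le_integral_shift hp h₁ h₂ hγ₁ hγ₂ hc hfB hfL k
      _ = ∫ xy, ∑ k, ∑ j, c (e j + k) xy ∂γ := by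
        rw [integral_finsetSum _ fun k _ => integrable_finsetSum _ fun j _ => hc _]
      _ = ∫ xy, I.card * ∑ i, c i xy ∂γ := by
        congr 1 with xy
        simp [sum_sum_add_eq_card_smul_sum e fun i => c i xy]
      _ = N * (I.card * ∫ xy, (N : ℝ)⁻¹ * ∑ i, c i xy ∂γ) := by
        rw [integral_const_mul, integral_const_mul]
        field_simp
  exact le_of_mul_le_mul_left hsum (by exact_mod_cast hN)

theorem abs_integral_projI_sub_le_fluctDist [IsProbabilityMeasure μ₁] [IsProbabilityMeasure μ₂]
    (hp : 1 ≤ p) (hN : 0 < N) (h₁ : PermInvariant μ₁) (h₂ : PermInvariant μ₂)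
    (hm₁ : ∀ i, Integrable (fun x : Fin N → ℝ => |x i| ^ p) μ₁)
    (hm₂ : ∀ i, Integrable (fun x : Fin N → ℝ => |x i| ^ p) μ₂) (hfB : ∀ a, |f a| ≤ B)
    (hfL : ∀ a b, |f a - f b| ≤ (∑ j, |a j - b j| ^ p) ^ (1 / p)) :
    |∫ x, f (projI I rfl x) ∂μ₁ - ∫ x, f (projI I rfl x) ∂μ₂| ≤
      (I.card : ℝ) ^ (1 / p) * fluctDist p N μ₁ μ₂ := by
  set S := {c : ℝ | ∃ γ : Measure ((Fin N → ℝ) × (Fin N → ℝ)), IsProbabilityMeasure γ ∧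
      γ.map Prod.fst = μ₁ ∧ γ.map Prod.snd = μ₂ ∧
      c = ∫ xy, (N : ℝ)⁻¹ * ∑ i, |xy.1 i - xy.2 i| ^ p ∂γ}
  have hS : S.Nonempty := ⟨_, μ₁.prod μ₂, inferInstance, by simp, by simp, rfl⟩
  have hS₀ : ∀ c ∈ S, 0 ≤ c := by
    rintro _ ⟨γ, -, -, -, rfl⟩
    exact integral_nonneg fun xy => by positivity
  have hD : |∫ x, f (projI I rfl x) ∂μ₁ - ∫ x, f (projI I rfl x) ∂μ₂| ^ p ≤
      I.card * sInf S := by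
    rw [← smul_eq_mul, ← Real.sInf_smul_of_nonneg (Nat.cast_nonneg _)]
    refine le_csInf (hS.smul_set) ?_
    rintro _ ⟨_, ⟨γ, hγ, hγ₁, hγ₂, rfl⟩, rfl⟩
    exact abs_integral_projI_sub_rpow_le_card_mul_integral hp hN h₁ h₂ hm₁ hm₂ hγ₁ hγ₂ hfB hfL
  rw [fluctDist, ← Real.mul_rpow (Nat.cast_nonneg _) (Real.sInf_nonneg hS₀), one_div]
  exact (Real.le_rpow_inv_iff_of_pos (abs_nonneg _) (by positivity [Real.sInf_nonneg hS₀])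
    (by linarith)).2 hD

end Projection

theorem abs_integral_sub_integral_bind_le {α β : Type*} [MeasurableSpace α] [MeasurableSpace β]
    (κ : Kernel α β) [IsMarkovKernel κ] (ν : Measure α) [IsProbabilityMeasure ν] {F : β → ℝ}
    (hF : StronglyMeasurable F) {B : ℝ} (hFB : ∀ y, |F y| ≤ B) (a : α) :
    |∫ y, F y ∂κ a - ∫ y, F y ∂ν.bind κ| ≤ ∫ a', |∫ y, F y ∂κ a - ∫ y, F y ∂κ a'| ∂ν := by
  have hFB' : ∀ y, ‖F y‖ ≤ B := fun y => (Real.norm_eq_abs _).trans_le (hFB y)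
  have hφ : Integrable (fun a' => ∫ y, F y ∂κ a') ν :=
    .of_bound hF.integral_kernel.aestronglyMeasurable B <| .of_forall fun a' => by
      simpa using norm_integral_le_of_norm_le_const (μ := κ a') (.of_forall hFB')
  have hbind : ∫ y, F y ∂ν.bind κ = ∫ a', ∫ y, F y ∂κ a' ∂ν := by
    rw [Measure.comp_eq_comp_const_apply,
      Kernel.integral_comp (.of_bound hF.aestronglyMeasurable B (.of_forall hFB'))]
    rfl
  calc |∫ y, F y ∂κ a - ∫ y, F y ∂ν.bind κ| = |∫ a', (∫ y, F y ∂κ a - ∫ y, F y ∂κ a') ∂ν| := by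
        rw [hbind, integral_sub (integrable_const _) hφ, integral_const, probReal_univ, one_smul]
    _ ≤ ∫ a', |∫ y, F y ∂κ a - ∫ y, F y ∂κ a'| ∂ν := abs_integral_le_integral_abs

theorem integrable_abs_sub_of_integrable_sq {ν : Measure ℝ} [IsFiniteMeasure ν]
    (hν : Integrable (fun t : ℝ => t ^ 2) ν) (ε : ℝ) : Integrable (fun t => |ε - t|) ν :=
  ((integrable_const ε).sub
    (((memLp_two_iff_integrable_sq aestronglyMeasurable_id).2 hν).integrable one_le_two)).abs

theorem integral_abs_sub_le_sqrt_variance_add {ν : Measure ℝ} [IsProbabilityMeasure ν]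
    (hν : Integrable (fun t : ℝ => t ^ 2) ν) (ε : ℝ) :
    ∫ t, |ε - t| ∂ν ≤ √(∫ s, (s - ∫ t, t ∂ν) ^ 2 ∂ν) + |ε - ∫ t, t ∂ν| := by
  set m := ∫ t, t ∂ν
  have h₂ : MemLp id 2 ν := (memLp_two_iff_integrable_sq aestronglyMeasurable_id).2 hν
  have hdev : Integrable (fun t => |t - m|) ν :=
    ((h₂.integrable one_le_two).sub (integrable_const m)).abs
  have hmean : ∫ t, |t - m| ∂ν ≤ √(∫ s, (s - m) ^ 2 ∂ν) := by
    refine Real.le_sqrt_of_sq_le ?_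
    have hvar : Integrable (fun t => |(|t - m|)| ^ (2 : ℝ)) ν := by
      simpa using (h₂.sub (memLp_const m)).integrable_sq
    simpa using abs_integral_rpow_le_integral_abs_rpow one_le_two hdev hvar
  calc ∫ t, |ε - t| ∂ν ≤ ∫ t, (|ε - m| + |t - m|) ∂ν :=
        integral_mono (integrable_abs_sub_of_integrable_sq hν ε) ((integrable_const _).add hdev)
          fun t => by
            simpa only [abs_sub_comm m t] using abs_sub_le ε m t
    _ = |ε - m| + ∫ t, |t - m| ∂ν := by rw [integral_add (integrable_const _) hdev]; simp
    _ ≤ √(∫ s, (s - m) ^ 2 ∂ν) + |ε - m| := by linarith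

theorem le_div_one_sub_div {n N : ℕ} (h : n < N) : (n : ℝ) ≤ n / (1 - n / N) := by
  have hN : (0 : ℝ) < N := by exact_mod_cast n.zero_le.trans_lt h
  have hnN : (n : ℝ) / N < 1 := (div_lt_one hN).2 (by exact_mod_cast h)
  have hn₀ : (0 : ℝ) ≤ n / N := by positivity
  exact le_div_self (Nat.cast_nonneg _) (by linarith) (by linarith)

theorem stmt2_general (p : ℝ) (hp : 1 ≤ p) (N : ℕ)
    -- the Markov kernel `ε' ↦ μ^{ε'}`
    (κ : ProbabilityTheory.Kernel ℝ (Fin N → ℝ)) [ProbabilityTheory.IsMarkovKernel κ]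
    (hperm : ∀ ε' : ℝ, PermInvariant (κ ε'))
    (hmom : ∀ (ε' : ℝ) (i : Fin N), Integrable (fun x : Fin N → ℝ => |x i| ^ p) (κ ε'))
    -- the mixing measure `ν`, with finite second moment
    (ν : Measure ℝ) [IsProbabilityMeasure ν]
    (hν : Integrable (fun t : ℝ => t ^ 2) ν)
    (ε C : ℝ) (hC : 0 < C)
    (hw : ∀ᵐ ε' ∂ν, fluctDist p N (κ ε) (κ ε') ≤ C * |ε - ε'|)
    (I : Finset (Fin N)) (hIN : I.card < N)
    (f : (Fin I.card → ℝ) → ℝ)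
    (hfB : ∃ B, ∀ a, |f a| ≤ B)
    (hfL : ∀ a b, |f a - f b| ≤ (∑ j, |a j - b j| ^ p) ^ (1 / p)) :
    |(∫ x, f (projI I rfl x) ∂(κ ε)) - ∫ x, f (projI I rfl x) ∂(ν.bind fun e => κ e)| ≤
      C * ((I.card : ℝ) / (1 - (I.card : ℝ) / N)) ^ (1 / p) *
        (Real.sqrt (∫ s, (s - ∫ t, t ∂ν) ^ 2 ∂ν) + |ε - ∫ t, t ∂ν|) := by
  obtain ⟨B, hfB⟩ := hfB
  have hN : 0 < N := I.card.zero_le.trans_lt hIN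
  set K := ((I.card : ℝ) / (1 - (I.card : ℝ) / N)) ^ (1 / p)
  have hK : (I.card : ℝ) ^ (1 / p) ≤ K :=
    Real.rpow_le_rpow (Nat.cast_nonneg _) (le_div_one_sub_div hIN) (by positivity)
  have hK₀ : 0 ≤ K := (Real.rpow_nonneg (Nat.cast_nonneg _) _).trans hK
  have hF : Continuous fun x => f (projI I rfl x) :=
    (continuous_of_abs_sub_le_lpDist hp hfL).comp (continuous_pi fun j => continuous_apply _)
  have hdist : ∀ᵐ ε' ∂ν, |∫ x, f (projI I rfl x) ∂κ ε - ∫ x, f (projI I rfl x) ∂κ ε'| ≤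
      C * K * |ε - ε'| := by
    filter_upwards [hw] with ε' hε'
    calc _ ≤ (I.card : ℝ) ^ (1 / p) * fluctDist p N (κ ε) (κ ε') :=
          abs_integral_projI_sub_le_fluctDist hp hN (hperm ε) (hperm ε') (hmom ε) (hmom ε') hfB hfL
      _ ≤ (I.card : ℝ) ^ (1 / p) * (C * |ε - ε'|) := by gcongr
      _ ≤ K * (C * |ε - ε'|) := by gcongr
      _ = C * K * |ε - ε'| := by ring
  calc _ ≤ ∫ ε', |∫ x, f (projI I rfl x) ∂κ ε - ∫ x, f (projI I rfl x) ∂κ ε'| ∂ν :=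
        abs_integral_sub_integral_bind_le κ ν hF.stronglyMeasurable (fun x => hfB _) ε
    _ ≤ ∫ t, C * K * |ε - t| ∂ν :=
        integral_mono_of_nonneg (.of_forall fun _ => abs_nonneg _)
          ((integrable_abs_sub_of_integrable_sq hν ε).const_mul _) hdist
    _ = C * K * ∫ t, |ε - t| ∂ν := integral_const_mul _ _
    _ ≤ _ := mul_le_mul_of_nonneg_left (integral_abs_sub_le_sqrt_variance_add hν ε)
        (mul_nonneg hC.le hK₀)

theorem stmt2 (p : ℝ) (hp : 1 ≤ p) (N : ℕ)
    -- the Markov kernel `ε' ↦ μ^{ε'}`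
    (κ : ProbabilityTheory.Kernel ℝ (Fin N → ℝ)) [ProbabilityTheory.IsMarkovKernel κ]
    (hperm : ∀ ε' : ℝ, PermInvariant (κ ε'))
    (hmom : ∀ (ε' : ℝ) (i : Fin N), Integrable (fun x : Fin N → ℝ => |x i| ^ p) (κ ε'))
    -- the mixing measure `ν`, with finite second moment
    (ν : Measure ℝ) [IsProbabilityMeasure ν]
    (hν : Integrable (fun t : ℝ => t ^ 2) ν)
    (ε C : ℝ) (hC : 0 < C)
    (hw : ∀ᵐ ε' ∂ν, fluctDist p N (κ ε) (κ ε') ≤ C * |ε - ε'|)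
    (I : Finset (Fin N)) (hI : I.Nonempty) (hIN : I.card < N)
    (f : (Fin I.card → ℝ) → ℝ)
    (hfB : ∃ B, ∀ a, |f a| ≤ B)
    (hfL : ∀ a b, |f a - f b| ≤ (∑ j, |a j - b j| ^ p) ^ (1 / p)) :
    |(∫ x, f (projI I rfl x) ∂(κ ε)) - ∫ x, f (projI I rfl x) ∂(ν.bind fun e => κ e)| ≤
      C * ((I.card : ℝ) / (1 - (I.card : ℝ) / N)) ^ (1 / p) *
        (Real.sqrt (∫ s, (s - ∫ t, t ∂ν) ^ 2 ∂ν) + |ε - ∫ t, t ∂ν|) :=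
  stmt2_general p hp N κ hperm hmom ν hν ε C hC hw I hIN f hfB hfL
end

section
/- Define F(m,μ) := ln 2 + ln cosh μ + μm + ((1+m)/2) ln((1+m)/2) + ((1−m)/2) ln((1−m)/2) for m ∈ (−1,1) and μ ∈ ℝ. Then: (i) for every m ∈ (−1,1), μ ∈ ℝ and η > 0 there exists N(m,η) ∈ ℕ such that for every N ≥ N(m,η) for which m lies in the range of m_N and m ∉ {−1,1}, one has (1/2 − η)·ln(N+1)/N ≤ H(μ_MC^{m;N} ‖ μ_C^{μ;N})/N − F(m,μ) ≤ ln(N+1)/N; (ii) for m ∈ (−1,1) and μ ∈ ℝ, F(m,μ) = 0 if and only if m = −tanh μ. -/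
/-- The magnetization `M[φ] = ∑_x φ(x)` of a spin configuration `φ ∈ {−1,1}^N`,
encoded as `φ : Fin N → Bool` with `true ↦ 1`, `false ↦ −1`. -/
noncomputable def mag {N : ℕ} (φ : Fin N → Bool) : ℝ :=
  ∑ x, if φ x then (1 : ℝ) else -1

-- The set `S_m` of configurations with magnetization density `m`.
open Classical in
noncomputable def magSet (N : ℕ) (m : ℝ) : Finset (Fin N → Bool) :=
  Finset.univ.filter fun φ => mag φ / N = m

/-- The auxiliary canonical partition function `Z_C(μ;N) = ∑_φ e^{−μ M[φ]}`. -/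
noncomputable def Zcan (N : ℕ) (μ : ℝ) : ℝ :=
  ∑ φ : Fin N → Bool, Real.exp (-μ * mag φ)

/-- The relative entropy `H(μ_MC^{m;N} ‖ μ_C^{μ;N})` of the auxiliary microcanonical ensemble
(uniform measure on `S_m`) with respect to the auxiliary canonical ensemble (probability
proportional to `e^{−μ M[φ]}`), written out as the explicit finite sum over the support `S_m`. -/
noncomputable def relEnt (N : ℕ) (m μ : ℝ) : ℝ :=
  ∑ φ ∈ magSet N m, ((magSet N m).card : ℝ)⁻¹ *
    Real.log (((magSet N m).card : ℝ)⁻¹ / (Real.exp (-μ * mag φ) / Zcan N μ))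

/-- The function `F(m,μ)` of the paper. -/
noncomputable def Fpara (m μ : ℝ) : ℝ :=
  Real.log 2 + Real.log (Real.cosh μ) + μ * m +
    (1 + m) / 2 * Real.log ((1 + m) / 2) + (1 - m) / 2 * Real.log ((1 - m) / 2)

/-!
All configurations with magnetization density `m` have the same canonical weight, and there are
`C(N, k)` of them with `k = N(1+m)/2`. Hence `H/N − F(m,μ)` is `(N h(k/N) − log C(N,k))/N`, where
`h` is the binary entropy. Writing the factorials through the Stirling sequence
`s_n = n!/(√(2n)(n/e)^n)`, which satisfies `√π ≤ s_n ≤ e/√2` for every `n ≥ 1`, this numerator is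
`½ log N` up to an additive constant, which gives both bounds.

`F(m,μ)` is the Kullback–Leibler divergence between the Bernoulli laws with parameters `(1+m)/2`
and `e^{−μ}/(2 cosh μ)`, so it vanishes exactly when the two parameters agree, i.e. when
`m = −tanh μ`.
-/

open Real Finset Filter Stirling InformationTheory

noncomputable def upSpins {N : ℕ} (φ : Fin N → Bool) : ℕ := #{x | φ x}

section Configurations

variable {N : ℕ} {m μ : ℝ}

lemma mag_eq_two_mul_upSpins_sub (φ : Fin N → Bool) : mag φ = 2 * upSpins φ - N := by
  have h := card_filter_add_card_filter_not (s := univ) (fun x => φ x = true)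
  simp only [card_univ, Fintype.card_fin] at h
  have hR : (N : ℝ) = #{x | φ x = true} + #{x | ¬φ x = true} := by exact_mod_cast h.symm
  rw [mag, sum_ite, sum_const, sum_const, upSpins, hR]
  simp only [nsmul_eq_mul]
  ring

lemma Zcan_eq (N : ℕ) (μ : ℝ) : Zcan N μ = (2 * cosh μ) ^ N := by
  have h := Fintype.sum_pow (fun b : Bool => exp (-μ * if b then (1 : ℝ) else -1)) N
  simp only [Fintype.sum_bool, if_true, Bool.false_eq_true, if_false] at h
  rw [Zcan, cosh_eq]
  simp only [mag, mul_sum, exp_sum, ← h]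
  ring_nf

lemma card_filter_upSpins_eq (N k : ℕ) : #{φ : Fin N → Bool | upSpins φ = k} = N.choose k := by
  rw [show N.choose k = #(powersetCard k (univ : Finset (Fin N))) by simp]
  refine card_nbij' (fun φ => ({x | φ x} : Finset (Fin N))) (fun s x => decide (x ∈ s)) ?_ ?_ ?_ ?_
  · intro φ hφ
    rw [mem_coe, mem_filter] at hφ
    simpa [upSpins] using hφ
  · intro s hs
    rw [mem_coe, mem_filter]
    simpa [upSpins] using hs
  · intro φ _
    ext x
    simp
  · intro s _
    ext x
    simp

lemma mag_eq_mul_of_mem_magSet {φ : Fin N → Bool} (hφ : φ ∈ magSet N m) : mag φ = N * m := by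
  rcases eq_or_ne N 0 with rfl | hN
  · simp [mag]
  · simp only [magSet, mem_filter, mem_univ, true_and] at hφ
    rw [← hφ]
    field_simp

lemma magSet_eq_filter_upSpins (hN : N ≠ 0) {φ₀ : Fin N → Bool} (h₀ : mag φ₀ / N = m) :
    magSet N m = ({φ | upSpins φ = upSpins φ₀} : Finset _) := by
  ext φ
  simp only [magSet, mem_filter, mem_univ, true_and, ← h₀, mag_eq_two_mul_upSpins_sub]
  constructor
  · intro h
    field_simp at h
    exact_mod_cast (by linarith : (upSpins φ : ℝ) = upSpins φ₀)
  · intro h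
    rw [h]

lemma card_magSet (hN : N ≠ 0) {φ₀ : Fin N → Bool} (h₀ : mag φ₀ / N = m) :
    #(magSet N m) = N.choose (upSpins φ₀) := by
  rw [magSet_eq_filter_upSpins hN h₀, card_filter_upSpins_eq]

lemma upSpins_div_eq (hN : N ≠ 0) {φ₀ : Fin N → Bool} (h₀ : mag φ₀ / N = m) :
    (upSpins φ₀ : ℝ) / N = (1 + m) / 2 := by
  rw [← h₀, mag_eq_two_mul_upSpins_sub]
  field_simp
  ring

lemma upSpins_pos_and_lt (hN : N ≠ 0) {φ₀ : Fin N → Bool} (h₀ : mag φ₀ / N = m)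
    (hm : m ∈ Set.Ioo (-1 : ℝ) 1) : 0 < upSpins φ₀ ∧ upSpins φ₀ < N := by
  have hN' : (0 : ℝ) < N := by positivity
  have hp := upSpins_div_eq hN h₀
  constructor
  · have h : (0 : ℝ) < upSpins φ₀ / N := by rw [hp]; linarith [hm.1]
    exact_mod_cast (div_pos_iff_of_pos_right hN').1 h
  · have h : (upSpins φ₀ : ℝ) / N < 1 := by rw [hp]; linarith [hm.2]
    exact_mod_cast (div_lt_one hN').1 h

lemma relEnt_eq (hS : (magSet N m).Nonempty) :
    relEnt N m μ = N * log (2 * cosh μ) + μ * (N * m) - log #(magSet N m) := by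
  have hc : (0 : ℝ) < #(magSet N m) := by exact_mod_cast hS.card_pos
  have hZ : 0 < Zcan N μ := by rw [Zcan_eq]; positivity
  rw [relEnt, sum_congr rfl fun φ hφ => by rw [mag_eq_mul_of_mem_magSet hφ], sum_const,
    nsmul_eq_mul, mul_inv_cancel_left₀ hc.ne', log_div (by positivity) (by positivity), log_inv,
    log_div (exp_ne_zero _) hZ.ne', log_exp, Zcan_eq, log_pow]
  ring

end Configurations

lemma Fpara_eq_log_sub_binEntropy (m μ : ℝ) :
    Fpara m μ = log (2 * cosh μ) + μ * m - binEntropy ((1 + m) / 2) := by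
  rw [Fpara, binEntropy, log_mul two_ne_zero (cosh_pos μ).ne',
    show 1 - (1 + m) / 2 = (1 - m) / 2 by ring, log_inv, log_inv]
  ring

noncomputable def entropyDeficit (n k : ℕ) : ℝ := n * binEntropy (k / n) - log (n.choose k)

lemma relEnt_div_sub_Fpara {N : ℕ} {m : ℝ} (μ : ℝ) (hN : N ≠ 0) {φ₀ : Fin N → Bool}
    (h₀ : mag φ₀ / N = m) :
    relEnt N m μ / N - Fpara m μ = entropyDeficit N (upSpins φ₀) / N := by
  have hS : (magSet N m).Nonempty := ⟨φ₀, by simp [magSet, h₀]⟩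
  rw [relEnt_eq hS, card_magSet hN h₀, Fpara_eq_log_sub_binEntropy, entropyDeficit,
    upSpins_div_eq hN h₀]
  field_simp
  ring

lemma log_stirlingSeq_le {n : ℕ} (hn : n ≠ 0) : log (stirlingSeq n) ≤ 1 - log 2 / 2 := by
  obtain ⟨k, rfl⟩ := Nat.exists_eq_add_of_le' (Nat.one_le_iff_ne_zero.2 hn)
  have hle : stirlingSeq (k + 1) ≤ stirlingSeq 1 := stirlingSeq'_antitone (Nat.zero_le k)
  rw [stirlingSeq_one] at hle
  calc log (stirlingSeq (k + 1)) ≤ log (exp 1 / √2) := log_le_log (stirlingSeq'_pos k) hle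
    _ = 1 - log 2 / 2 := by
      rw [log_div (exp_ne_zero 1) (by positivity), log_exp, log_sqrt zero_le_two]

lemma log_pi_div_two_le_log_stirlingSeq {n : ℕ} (hn : n ≠ 0) : log π / 2 ≤ log (stirlingSeq n) := by
  rw [← log_sqrt pi_pos.le]
  exact log_le_log (sqrt_pos.2 pi_pos) (sqrt_pi_le_stirlingSeq hn)

lemma log_stirlingSeq_eq {n : ℕ} (hn : n ≠ 0) :
    log (stirlingSeq n) = log n.factorial - (log 2 + log n) / 2 - n * (log n - 1) := by
  have hn' : (0 : ℝ) < n := by positivity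
  rw [log_stirlingSeq_formula, log_mul two_ne_zero hn'.ne', log_div hn'.ne' (exp_ne_zero 1),
    log_exp]
  ring

lemma entropyDeficit_add_eq {k j : ℕ} (hk : k ≠ 0) (hj : j ≠ 0) :
    entropyDeficit (k + j) k = log (stirlingSeq k) + log (stirlingSeq j) - log (stirlingSeq (k + j))
      + log (2 * k * j / (k + j)) / 2 := by
  have hk' : (0 : ℝ) < k := by positivity
  have hj' : (0 : ℝ) < j := by positivity
  have hchoose : log ((k + j).choose k) =
      log (k + j).factorial - log k.factorial - log j.factorial := by
    have hc : ((k + j).choose k : ℝ) ≠ 0 := by exact_mod_cast (Nat.choose_pos (by omega)).ne'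
    have h := Nat.add_choose_mul_factorial_mul_factorial j k
    rw [add_comm j k] at h
    rw [← h]
    push_cast
    rw [log_mul (mul_ne_zero hc (by positivity)) (by positivity), log_mul hc (by positivity)]
    ring
  have hbin : binEntropy (k / (k + j)) = log (k + j) - (k * log k + j * log j) / (k + j) := by
    rw [binEntropy, show 1 - (k : ℝ) / (k + j) = j / (k + j) by field_simp; ring, log_inv, log_inv,
      log_div hk'.ne' (by positivity), log_div hj'.ne' (by positivity)]
    field_simp
    ring
  have hlog : log (2 * k * j / (k + j)) = log 2 + log k + log j - log (k + j) := by
    rw [log_div (by positivity) (by positivity), log_mul (by positivity) hj'.ne',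
      log_mul two_ne_zero hk'.ne']
  rw [entropyDeficit, log_stirlingSeq_eq hk, log_stirlingSeq_eq hj,
    log_stirlingSeq_eq (by omega), hlog, hchoose]
  push_cast
  rw [hbin]
  field_simp
  ring

lemma log_two_add_half_log_le_log_add_one {x : ℝ} (hx : 0 < x) :
    log 2 + log x / 2 ≤ log (x + 1) := by
  have h := log_le_log (by positivity) (by nlinarith [sq_nonneg (x - 1)] : 2 ^ 2 * x ≤ (x + 1) ^ 2)
  rw [log_mul (by positivity) hx.ne', log_pow, log_pow] at h
  push_cast at h
  linarith

lemma one_le_log_pi : 1 ≤ log π := by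
  rw [le_log_iff_exp_le pi_pos]
  linarith [exp_one_lt_d9, pi_gt_three]

lemma entropyDeficit_le_log_add_one {n k : ℕ} (hk : 0 < k) (hkn : k < n) :
    entropyDeficit n k ≤ log (n + 1) := by
  obtain ⟨j, rfl⟩ := Nat.exists_eq_add_of_le hkn.le
  have hj : j ≠ 0 := by omega
  have hk' : (0 : ℝ) < k := by exact_mod_cast hk
  have hj' : (0 : ℝ) < j := by positivity
  have hmean : log (2 * k * j / (k + j)) ≤ log (k + j) - log 2 := by
    rw [← log_div (by positivity) two_ne_zero]
    refine log_le_log (by positivity) ?_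
    rw [div_le_div_iff₀ (by positivity) two_pos]
    nlinarith [sq_nonneg ((k : ℝ) - j)]
  rw [entropyDeficit_add_eq hk.ne' hj, Nat.cast_add]
  linarith [log_stirlingSeq_le hk.ne', log_stirlingSeq_le hj,
    log_pi_div_two_le_log_stirlingSeq (n := k + j) (by omega),
    log_two_add_half_log_le_log_add_one (by positivity : (0 : ℝ) < k + j), one_le_log_pi,
    log_two_gt_d9]

lemma le_entropyDeficit {n k : ℕ} (hk : 0 < k) (hkn : k < n) :
    log n / 2 + (log π - 1 + log 2 / 2 + log (2 * (k / n) * (1 - k / n)) / 2) ≤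
      entropyDeficit n k := by
  obtain ⟨j, rfl⟩ := Nat.exists_eq_add_of_le hkn.le
  have hj : j ≠ 0 := by omega
  have hk' : (0 : ℝ) < k := by exact_mod_cast hk
  have hj' : (0 : ℝ) < j := by positivity
  have hsplit : log (2 * k * j / (k + j)) =
      log (k + j) + log (2 * (k / (k + j)) * (1 - k / (k + j))) := by
    rw [← log_mul (by positivity) ?_]
    · congr 1
      field_simp
      ring
    · rw [show 1 - (k : ℝ) / (k + j) = j / (k + j) by field_simp; ring]
      positivity
  rw [entropyDeficit_add_eq hk.ne' hj, Nat.cast_add, hsplit]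
  linarith [log_stirlingSeq_le (n := k + j) (by omega), log_pi_div_two_le_log_stirlingSeq hk.ne',
    log_pi_div_two_le_log_stirlingSeq hj]

lemma eventually_mul_log_add_one_le {η : ℝ} (hη : 0 < η) (c : ℝ) :
    ∀ᶠ N : ℕ in atTop, (1 / 2 - η) * log (N + 1) ≤ log N / 2 + c := by
  have hlog : Tendsto (fun N : ℕ => η * log N) atTop atTop :=
    (tendsto_log_atTop.comp tendsto_natCast_atTop_atTop).const_mul_atTop hη
  filter_upwards [hlog.eventually_ge_atTop (log 2 / 2 - c), eventually_ge_atTop 1] with N hN hN1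
  have hN' : (1 : ℝ) ≤ N := by exact_mod_cast hN1
  have hmono : log N ≤ log (N + 1) := log_le_log (by linarith) (by linarith)
  have hdouble : log (N + 1) ≤ log 2 + log N := by
    rw [← log_mul two_ne_zero (by linarith)]
    exact log_le_log (by linarith) (by linarith)
  nlinarith

lemma mul_klFun_div_add_mul_klFun_div {p q r s : ℝ} (hr : r ≠ 0) (hs : s ≠ 0) (h : p + q = r + s) :
    r * klFun (p / r) + s * klFun (q / s) = p * log (p / r) + q * log (q / s) := by
  simp only [klFun]
  field_simp
  linarith

lemma Fpara_eq_sum_mul_log_div {m : ℝ} (hm : m ∈ Set.Ioo (-1 : ℝ) 1) (μ : ℝ) :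
    Fpara m μ = (1 + m) / 2 * log ((1 + m) / 2 / (exp (-μ) / (2 * cosh μ))) +
      (1 - m) / 2 * log ((1 - m) / 2 / (exp μ / (2 * cosh μ))) := by
  obtain ⟨hm1, hm2⟩ := hm
  have hc : 0 < 2 * cosh μ := by positivity
  rw [Fpara, log_div (x := (1 + m) / 2) (by linarith) (by positivity),
    log_div (x := (1 - m) / 2) (by linarith) (by positivity), log_div (exp_ne_zero _) hc.ne',
    log_div (exp_ne_zero _) hc.ne', log_exp, log_exp,
    log_mul two_ne_zero (cosh_pos μ).ne']
  ring

lemma Fpara_eq_zero_iff {m : ℝ} (hm : m ∈ Set.Ioo (-1 : ℝ) 1) (μ : ℝ) :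
    Fpara m μ = 0 ↔ m = -tanh μ := by
  set r := exp (-μ) / (2 * cosh μ)
  set s := exp μ / (2 * cosh μ)
  have hr : 0 < r := by positivity
  have hs : 0 < s := by positivity
  have hrs : r + s = 1 := by
    simp only [r, s, cosh_eq]
    field_simp
    ring
  have htanh : -tanh μ = r - s := by
    simp only [r, s, tanh_eq_sinh_div_cosh, sinh_eq, cosh_eq]
    field_simp
    ring
  have hp : 0 ≤ (1 + m) / 2 / r := div_nonneg (by linarith [hm.1]) hr.le
  have hq : 0 ≤ (1 - m) / 2 / s := div_nonneg (by linarith [hm.2]) hs.le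
  rw [Fpara_eq_sum_mul_log_div hm, ← mul_klFun_div_add_mul_klFun_div hr.ne' hs.ne' (by linarith),
    add_eq_zero_iff_of_nonneg (mul_nonneg hr.le (klFun_nonneg hp))
      (mul_nonneg hs.le (klFun_nonneg hq)),
    mul_eq_zero, mul_eq_zero, or_iff_right hr.ne', or_iff_right hs.ne', klFun_eq_zero_iff hp,
    klFun_eq_zero_iff hq, div_eq_one_iff_eq hr.ne', div_eq_one_iff_eq hs.ne', htanh]
  constructor
  · rintro ⟨h1, h2⟩
    linarith
  · intro h
    constructor <;> linarith

theorem stmt4 :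
    -- (i) two-sided bound for the specific relative entropy
    (∀ m ∈ Set.Ioo (-1 : ℝ) 1, ∀ μ : ℝ, ∀ η : ℝ, 0 < η →
      ∃ N₀ : ℕ, ∀ N : ℕ, N₀ ≤ N →
        (∃ φ : Fin N → Bool, mag φ / N = m) →
          (1 / 2 - η) * Real.log (N + 1) / N ≤ relEnt N m μ / N - Fpara m μ ∧
          relEnt N m μ / N - Fpara m μ ≤ Real.log (N + 1) / N) ∧
    -- (ii) `F(m,μ) = 0` iff `m = −tanh μ`
    (∀ m ∈ Set.Ioo (-1 : ℝ) 1, ∀ μ : ℝ, (Fpara m μ = 0 ↔ m = -Real.tanh μ)) := by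
  refine ⟨fun m hm μ η hη => ?_, fun m hm μ => Fpara_eq_zero_iff hm μ⟩
  obtain ⟨N₀, hN₀⟩ := eventually_atTop.1 ((eventually_ge_atTop 1).and
    (eventually_mul_log_add_one_le hη
      (log π - 1 + log 2 / 2 + log (2 * ((1 + m) / 2) * (1 - (1 + m) / 2)) / 2)))
  refine ⟨N₀, fun N hN₀N ⟨φ₀, h₀⟩ => ?_⟩
  obtain ⟨hN1, hgrowth⟩ := hN₀ N hN₀N
  have hN : N ≠ 0 := by omega
  have hN' : (0 : ℝ) < N := by positivity
  obtain ⟨hk, hkN⟩ := upSpins_pos_and_lt hN h₀ hm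
  have hlow := le_entropyDeficit hk hkN
  rw [upSpins_div_eq hN h₀] at hlow
  rw [relEnt_div_sub_Fpara μ hN h₀]
  exact ⟨div_le_div_of_nonneg_right (hgrowth.trans hlow) hN'.le,
    div_le_div_of_nonneg_right (entropyDeficit_le_log_add_one hk hkN) hN'.le⟩
end

section
/- Let Λ be a finite set with N := |Λ|, let m lie in the range of m_N with m ∉ {−1,1}, and let μ ∈ ℝ. Let I ⊆ Λ be nonempty and let f : {−1,1}^{|I|} → ℝ. Then (1/2)·|∫ f∘P_I dμ_MC^{m;N} − ∫ f∘P_I dμ_C^{μ;N}|² ≤ |I| · (max_{σ∈{−1,1}^{|I|}} |f(σ)|)² · H(μ_MC^{m;N} ‖ μ_C^{μ;N}) / N. -/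
/-- Expectation of `f` in the auxiliary microcanonical ensemble `μ_MC^{m;N}`
(the uniform probability measure on `S_m`). -/
noncomputable def mcExp (N : ℕ) (m : ℝ) (f : (Fin N → Bool) → ℝ) : ℝ :=
  (∑ φ ∈ magSet N m, f φ) / ((magSet N m).card : ℝ)

/-- Expectation of `f` in the auxiliary canonical ensemble `μ_C^{μ;N}`
(probability proportional to `e^{−μ M[φ]}`). -/
noncomputable def canExp (N : ℕ) (μ : ℝ) (f : (Fin N → Bool) → ℝ) : ℝ :=
  (∑ φ : Fin N → Bool, Real.exp (-μ * mag φ) * f φ) / Zcan N μ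

/-- The projection `P_I : {−1,1}^N → {−1,1}^n` sending `φ` to the coordinates `(φ(x))_{x ∈ I}`
listed in increasing order of the original index. -/
noncomputable def projB {N n : ℕ} (I : Finset (Fin N)) (h : I.card = n)
    (φ : Fin N → Bool) (j : Fin n) : Bool :=
  φ ↑(I.orderIsoOfFin h j)

open Finset Real InformationTheory

/-!
Both ensembles are exchangeable, so their marginals on `I` depend only on the number of `true`
spins: hypergeometric for the microcanonical ensemble and a product of Bernoulli weights for the
canonical one. Pinsker's inequality bounds the squared total variation distance of the two
marginals by twice their relative entropy `D n`, where `n = |I|`. By the chain rule, `D n` is the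
sum of the increments `E j = D (j + 1) - D j` for `j < n`, and `E j` is the average binary relative
entropy of the conditional probability that the next site is `true`. That conditional probability
is a martingale and binary relative entropy is convex, so `E j` is nondecreasing in `j`. Hence
`D n / n ≤ D N / N`, and `D N` is the relative entropy of the two ensembles.
-/

noncomputable def relEntropy {ι : Type*} [Fintype ι] (a b : ι → ℝ) : ℝ :=
  ∑ i, a i * log (a i / b i)

lemma three_mul_sq_sub_one_le_klFun {t : ℝ} (ht : 0 ≤ t) :
    3 * (t - 1) ^ 2 ≤ 2 * (t + 2) * klFun t := by
  set g : ℝ → ℝ := fun t => 2 * (t + 2) * klFun t - 3 * (t - 1) ^ 2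
  set g' : ℝ → ℝ := fun t => 2 * klFun t + 2 * (t + 2) * log t - 6 * (t - 1)
  have hg : ∀ {t}, t ≠ 0 → HasDerivAt g (g' t) t := fun {t} ht =>
    (((((hasDerivAt_id' t).add_const 2).const_mul 2).mul (hasDerivAt_klFun ht)).sub
      ((((hasDerivAt_id' t).sub_const 1).pow 2).const_mul 3)).congr_deriv (by simp [g']; ring)
  have hg' : ∀ {t}, 0 < t → HasDerivAt g' (4 * (log t + t⁻¹ - 1)) t := fun {t} ht =>
    ((((hasDerivAt_klFun ht.ne').const_mul 2).add
      ((((hasDerivAt_id' t).add_const 2).const_mul 2).mul (hasDerivAt_log ht.ne'))).sub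
      (((hasDerivAt_id' t).sub_const 1).const_mul 6)).congr_deriv (by field_simp; ring)
  have hg'_mono : MonotoneOn g' (Set.Ioi 0) :=
    monotoneOn_of_hasDerivWithinAt_nonneg (convex_Ioi 0)
      (fun t ht => (hg' ht).continuousAt.continuousWithinAt)
      (fun t ht => (hg' (interior_subset ht : (0:ℝ) < t)).hasDerivWithinAt)
      (fun t ht => by
        have := one_sub_inv_le_log_of_pos (interior_subset ht : (0:ℝ) < t); linarith)
  have hg'_one : g' 1 = 0 := by simp [g', klFun_one]
  have hcont : Continuous g := by fun_prop
  have hmin : IsMinOn g (Set.Ici 0) 1 :=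
    isMinOn_Ici_of_deriv hcont.continuousAt hcont.continuousAt
      (fun t ht => (hg ht.1.ne').differentiableAt.differentiableWithinAt)
      (fun t ht => (hg (by linarith [ht.out] : t ≠ 0)).differentiableAt.differentiableWithinAt)
      (fun t ht => by
        rw [(hg ht.1.ne').deriv, ← hg'_one]
        exact hg'_mono ht.1 (Set.mem_Ioi.2 one_pos) ht.2.le)
      (fun t ht => by
        have ht' : (0:ℝ) < t := one_pos.trans ht
        rw [(hg ht'.ne').deriv, ← hg'_one]
        exact hg'_mono (Set.mem_Ioi.2 one_pos) ht' ht.out.le)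
  have h : g 1 ≤ g t := hmin ht
  simp only [g, klFun_one] at h
  linarith

lemma three_mul_sq_sub_div_add_two_mul_le {a b : ℝ} (ha : 0 ≤ a) (hb : 0 < b) :
    3 * ((a - b) ^ 2 / (a + 2 * b)) ≤ 2 * (a * log (a / b) - a + b) := by
  have key := mul_le_mul_of_nonneg_left (three_mul_sq_sub_one_le_klFun (div_nonneg ha hb.le))
    (sq_nonneg b)
  rw [mul_div_assoc', div_le_iff₀ (by positivity)]
  calc 3 * (a - b) ^ 2 = b ^ 2 * (3 * (a / b - 1) ^ 2) := by field_simp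
    _ ≤ b ^ 2 * (2 * (a / b + 2) * klFun (a / b)) := key
    _ = 2 * (a * log (a / b) - a + b) * (a + 2 * b) := by
      rw [klFun_apply]; field_simp; ring

theorem sq_sum_abs_sub_le_two_mul_relEntropy {ι : Type*} [Fintype ι] {a b : ι → ℝ}
    (ha : ∀ i, 0 ≤ a i) (hb : ∀ i, 0 < b i) (ha1 : ∑ i, a i = 1) (hb1 : ∑ i, b i = 1) :
    (∑ i, |a i - b i|) ^ 2 ≤ 2 * relEntropy a b := by
  have hsum : ∑ i, (a i + 2 * b i) = 3 := by
    rw [sum_add_distrib, ← mul_sum, ha1, hb1]; norm_num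
  have sedrakyan := sq_sum_div_le_sum_sq_div univ (fun i => |a i - b i|)
    (fun i _ => by linarith [ha i, hb i] : ∀ i ∈ univ, 0 < a i + 2 * b i)
  rw [hsum] at sedrakyan
  calc (∑ i, |a i - b i|) ^ 2 ≤ 3 * ∑ i, (a i - b i) ^ 2 / (a i + 2 * b i) := by
        simp only [sq_abs] at sedrakyan; linarith
    _ ≤ ∑ i, 2 * (a i * log (a i / b i) - a i + b i) := by
        rw [mul_sum]; exact sum_le_sum fun i _ => three_mul_sq_sub_div_add_two_mul_le (ha i) (hb i)
    _ = 2 * relEntropy a b := by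
        simp only [← mul_sum, sum_add_distrib, sum_sub_distrib, ha1, hb1, relEntropy]; ring

lemma sum_fin_succ_pi {α M : Type*} [Fintype α] [AddCommMonoid M] {n : ℕ}
    (F : (Fin (n + 1) → α) → M) :
    ∑ τ, F τ = ∑ σ : Fin n → α, ∑ a, F (Fin.cons a σ) := by
  rw [← (Fin.consEquiv fun _ => α).sum_comp, Fintype.sum_prod_type_right]
  rfl

lemma mul_log_mul_div_mul {a p b w : ℝ} (ha : 0 ≤ a) (hp : a ≠ 0 → 0 ≤ p) (hb : 0 < b)
    (hw : 0 < w) :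
    a * p * log (a * p / (b * w)) = p * (a * log (a / b)) + a * (p * log (p / w)) := by
  rcases ha.eq_or_lt with rfl | ha
  · simp
  rcases (hp ha.ne').eq_or_lt with rfl | hp
  · simp
  rw [mul_div_mul_comm, log_mul (by positivity) (by positivity)]
  ring

theorem relEntropy_fin_succ {α : Type*} [Fintype α] {n : ℕ}
    {A B : (Fin (n + 1) → α) → ℝ} {a b : (Fin n → α) → ℝ} {κ : (Fin n → α) → α → ℝ}
    {w : α → ℝ} (hA : ∀ x σ, A (Fin.cons x σ) = a σ * κ σ x)
    (hB : ∀ x σ, B (Fin.cons x σ) = b σ * w x) (ha : ∀ σ, 0 ≤ a σ)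
    (hκ : ∀ σ, a σ ≠ 0 → ∀ x, 0 ≤ κ σ x) (hκ1 : ∀ σ, ∑ x, κ σ x = 1) (hb : ∀ σ, 0 < b σ)
    (hw : ∀ x, 0 < w x) :
    relEntropy A B = relEntropy a b + ∑ σ, a σ * relEntropy (κ σ) w := by
  rw [relEntropy, sum_fin_succ_pi, relEntropy, ← sum_add_distrib]
  refine sum_congr rfl fun σ _ => ?_
  simp only [hA, hB, relEntropy, mul_sum]
  rw [sum_congr rfl fun x _ => mul_log_mul_div_mul (ha σ) (fun h => hκ σ h x) (hb σ) (hw x),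
    sum_add_distrib, ← sum_mul, hκ1, one_mul]

def bernoulliWeight (x : ℝ) (b : Bool) : ℝ := if b then x else 1 - x

lemma sum_bernoulliWeight (x : ℝ) : ∑ b, bernoulliWeight x b = 1 := by
  simp [bernoulliWeight]

lemma convexOn_mul_log_div {c : ℝ} (hc : 0 < c) :
    ConvexOn ℝ (Set.Ici 0) fun u => u * log (u / c) := by
  refine (convexOn_mul_log.sub ((LinearMap.mulRight ℝ (log c)).concaveOn (convex_Ici 0))).congr
    fun u hu => ?_
  rcases (Set.mem_Ici.1 hu).eq_or_lt with rfl | hu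
  · simp
  simp [log_div hu.ne' hc.ne', mul_sub]

lemma convexOn_relEntropy_bernoulliWeight {w : Bool → ℝ} (hw : ∀ b, 0 < w b) :
    ConvexOn ℝ (Set.Icc 0 1) fun x => relEntropy (bernoulliWeight x) w := by
  refine ⟨convex_Icc 0 1, fun x hx y hy θ η hθ hη hθη => ?_⟩
  have h₁ := (convexOn_mul_log_div (hw true)).2 (Set.mem_Ici.2 hx.1) (Set.mem_Ici.2 hy.1) hθ hη hθη
  have h₂ := (convexOn_mul_log_div (hw false)).2 (Set.mem_Ici.2 (sub_nonneg.2 hx.2))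
    (Set.mem_Ici.2 (sub_nonneg.2 hy.2)) hθ hη hθη
  have h1x : 1 - (θ * x + η * y) = θ * (1 - x) + η * (1 - y) := by
    linear_combination -hθη
  simp only [relEntropy, Fintype.sum_bool, bernoulliWeight, if_true, Bool.false_eq_true,
    if_false, smul_eq_mul] at h₁ h₂ ⊢
  rw [h1x]
  linarith

section Configurations

variable {α : Type*} [Fintype α]

def numTrue (g : α → Bool) : ℕ := #{x | g x}

lemma numTrue_eq_sum (g : α → Bool) : numTrue g = ∑ x, (g x).toNat := by
  rw [numTrue, card_filter]
  congr! 1 with x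
  cases g x <;> rfl

lemma numTrue_le (g : α → Bool) : numTrue g ≤ Fintype.card α := card_le_univ _

lemma card_filter_numTrue_eq [DecidableEq α] (r : ℕ) :
    #{g : α → Bool | numTrue g = r} = (Fintype.card α).choose r := by
  rw [← card_univ, ← card_powersetCard]
  refine card_bij' (fun g _ => ({x | g x} : Finset α)) (fun s _ x => decide (x ∈ s)) ?_ ?_ ?_ ?_
  · intro g hg
    exact mem_powersetCard.2 ⟨subset_univ _, (mem_filter.1 hg).2⟩
  · intro s hs
    refine mem_filter.2 ⟨mem_univ _, ?_⟩
    simpa [numTrue] using (mem_powersetCard.1 hs).2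
  · intro g _; ext x; simp
  · intro s _; ext x; simp

lemma numTrue_cons {n : ℕ} (b : Bool) (σ : Fin n → Bool) :
    numTrue (Fin.cons b σ : Fin (n + 1) → Bool) = numTrue σ + b.toNat := by
  simp [numTrue_eq_sum, Fin.sum_univ_succ, add_comm]

noncomputable def productWeight (w : Bool → ℝ) (g : α → Bool) : ℝ := ∏ x, w (g x)

lemma productWeight_pos {w : Bool → ℝ} (hw : ∀ b, 0 < w b) (g : α → Bool) :
    0 < productWeight w g :=
  prod_pos fun x _ => hw (g x)

lemma sum_productWeight [DecidableEq α] (w : Bool → ℝ) :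
    ∑ g : α → Bool, productWeight w g = (∑ b, w b) ^ Fintype.card α := by
  simp only [productWeight]
  rw [← Fintype.prod_sum, prod_const, card_univ]

lemma productWeight_cons {n : ℕ} (w : Bool → ℝ) (b : Bool) (σ : Fin n → Bool) :
    productWeight w (Fin.cons b σ : Fin (n + 1) → Bool) = w b * productWeight w σ := by
  simp [productWeight, Fin.prod_univ_succ]

end Configurations

section Splitting

variable {N : ℕ} (I : Finset (Fin N)) {β : Type*}

noncomputable def splitEquiv : (Fin N → β) ≃ (Fin I.card → β) × ({x // x ∉ I} → β) :=
  ((Equiv.sumCompl (· ∈ I)).arrowCongr (Equiv.refl β)).symm.trans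
    ((Equiv.sumArrowEquivProdArrow _ _ β).trans
      (((I.orderIsoOfFin rfl).toEquiv.symm.arrowCongr (Equiv.refl β)).prodCongr (Equiv.refl _)))

lemma projB_splitEquiv_symm (σ : Fin I.card → Bool) (v : {x // x ∉ I} → Bool) :
    projB I rfl ((splitEquiv I).symm (σ, v)) = σ :=
  congrArg Prod.fst ((splitEquiv I).apply_symm_apply (σ, v))

@[to_additive]
lemma prod_splitEquiv_symm {M : Type*} [CommMonoid M] (r : β → M) (σ : Fin I.card → β)
    (v : {x // x ∉ I} → β) :
    ∏ x, r ((splitEquiv I).symm (σ, v) x) = (∏ j, r (σ j)) * ∏ x, r (v x) := by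
  rw [← (Equiv.sumCompl (· ∈ I)).prod_comp, Fintype.prod_sum_type]
  congr 1
  · exact Fintype.prod_equiv (I.orderIsoOfFin rfl).toEquiv.symm _ _ fun _ => by simp [splitEquiv]
  · exact Fintype.prod_congr _ _ fun _ => by simp [splitEquiv]

lemma numTrue_splitEquiv_symm (σ : Fin I.card → Bool) (v : {x // x ∉ I} → Bool) :
    numTrue ((splitEquiv I).symm (σ, v)) = numTrue σ + numTrue v := by
  simp only [numTrue_eq_sum, sum_splitEquiv_symm]

lemma productWeight_splitEquiv_symm (w : Bool → ℝ) (σ : Fin I.card → Bool)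
    (v : {x // x ∉ I} → Bool) :
    productWeight w ((splitEquiv I).symm (σ, v)) = productWeight w σ * productWeight w v :=
  prod_splitEquiv_symm I w σ v

end Splitting

lemma sum_range_le_mul_sum_range_div {e : ℕ → ℝ} {n N : ℕ} (he : MonotoneOn e (Set.Iio N))
    (hn : n ≤ N) : ∑ j ∈ range n, e j ≤ n * ((∑ j ∈ range N, e j) / N) := by
  rcases hn.eq_or_lt with rfl | hn
  · rcases n.eq_zero_or_pos with rfl | hn
    · simp
    · rw [mul_div_cancel₀ _ (by positivity)]
  have hA : ∑ j ∈ range n, e j ≤ n * e n := by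
    refine (sum_le_sum fun j hj => he (mem_range.1 hj |>.trans hn) hn
      (mem_range.1 hj).le).trans_eq ?_
    simp
  have hB : (N - n : ℝ) * e n ≤ ∑ j ∈ Ico n N, e j := by
    refine le_of_eq_of_le ?_ (sum_le_sum fun j hj => he hn (mem_Ico.1 hj).2 (mem_Ico.1 hj).1)
    simp [Nat.cast_sub hn.le]
  have hnN : (n : ℝ) < N := by exact_mod_cast hn
  rw [← sum_range_add_sum_Ico e hn.le, mul_div_assoc', le_div_iff₀ (by linarith)]
  nlinarith

section Hypergeometric

variable (N k : ℕ)

-- The probability that `n` given sites carry a given pattern with `t` trues when the `k` true sites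
-- among `N` are chosen uniformly; the `if` guards the truncated subtraction `k - t`.
noncomputable def hypergeomWeight (n t : ℕ) : ℝ :=
  if t ≤ k then ((N - n).choose (k - t) : ℝ) / (N.choose k : ℝ) else 0

-- The conditional probability that site `n + 1` is `true` given `t` trues among the first `n`.
noncomputable def drawProb (n t : ℕ) : ℝ := ((k - t : ℕ) : ℝ) / ((N - n : ℕ) : ℝ)

noncomputable def drawExpectation (g : ℝ → ℝ) (n : ℕ) : ℝ :=
  ∑ σ : Fin n → Bool, hypergeomWeight N k n (numTrue σ) * g (drawProb N k n (numTrue σ))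

noncomputable def marginalKL (w : Bool → ℝ) (n : ℕ) : ℝ :=
  relEntropy (fun σ : Fin n → Bool => hypergeomWeight N k n (numTrue σ)) (productWeight w)

variable {N k}

lemma hypergeomWeight_nonneg (n t : ℕ) : 0 ≤ hypergeomWeight N k n t := by
  unfold hypergeomWeight; split_ifs <;> positivity

lemma le_of_hypergeomWeight_ne_zero {n t : ℕ} (h : hypergeomWeight N k n t ≠ 0) :
    t ≤ k ∧ k - t ≤ N - n := by
  unfold hypergeomWeight at h
  split_ifs at h with ht
  · refine ⟨ht, not_lt.1 fun hlt => h ?_⟩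
    rw [Nat.choose_eq_zero_of_lt hlt, Nat.cast_zero, zero_div]
  · exact absurd rfl h

lemma drawProb_mem_Icc {n t : ℕ} (h : hypergeomWeight N k n t ≠ 0) :
    drawProb N k n t ∈ Set.Icc 0 1 := by
  refine ⟨by unfold drawProb; positivity, div_le_one_of_le₀ ?_ (Nat.cast_nonneg _)⟩
  exact_mod_cast (le_of_hypergeomWeight_ne_zero h).2

lemma hypergeomWeight_succ_add {n : ℕ} (hn : n < N) (t : ℕ) (b : Bool) :
    hypergeomWeight N k (n + 1) (t + b.toNat) =
      hypergeomWeight N k n t * bernoulliWeight (drawProb N k n t) b := by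
  obtain ⟨M, hM, hM'⟩ : ∃ M, N - n = M + 1 ∧ N - (n + 1) = M := ⟨N - (n + 1), by omega, rfl⟩
  unfold hypergeomWeight drawProb bernoulliWeight
  rw [hM, hM']
  cases b
  · simp only [Bool.toNat_false, add_zero, Bool.false_eq_true, if_false]
    split_ifs with ht
    · rcases le_or_gt (k - t) (M + 1) with hR | hR
      · have h := congrArg (Nat.cast : ℕ → ℝ) (Nat.choose_mul_succ_eq M (k - t))
        push_cast [Nat.cast_sub hR] at h ⊢
        rw [div_mul_eq_mul_div]
        congr 1
        field_simp
        linear_combination h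
      · rw [Nat.choose_eq_zero_of_lt hR, Nat.choose_eq_zero_of_lt (by omega)]
        simp
    · simp
  · simp only [Bool.toNat_true, if_true]
    by_cases ht : t + 1 ≤ k
    · obtain ⟨R, hR, hR'⟩ : ∃ R, k - t = R + 1 ∧ k - (t + 1) = R := ⟨k - (t + 1), by omega, rfl⟩
      rw [if_pos ht, if_pos (by omega), hR, hR']
      have h := congrArg (Nat.cast : ℕ → ℝ) (Nat.add_one_mul_choose_eq M R)
      push_cast at h ⊢
      rw [div_mul_eq_mul_div]
      congr 1
      field_simp
      linear_combination h
    · rw [if_neg ht]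
      split_ifs with ht'
      · rw [show k - t = 0 by omega]; simp
      · simp

lemma hypergeomWeight_zero_zero (hk : k ≤ N) : hypergeomWeight N k 0 0 = 1 := by
  have : (N.choose k : ℝ) ≠ 0 := by exact_mod_cast (Nat.choose_pos hk).ne'
  simp [hypergeomWeight, this]

lemma hypergeomWeight_self (t : ℕ) :
    hypergeomWeight N k N t = if t = k then ((N.choose k : ℕ) : ℝ)⁻¹ else 0 := by
  unfold hypergeomWeight
  split_ifs with h₁ h₂ h₂
  · simp [h₂]
  · rw [Nat.sub_self, Nat.choose_eq_zero_of_lt (by omega)]; simp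
  · omega
  · rfl

lemma sum_hypergeomWeight (hk : k ≤ N) {n : ℕ} (hn : n ≤ N) :
    ∑ σ : Fin n → Bool, hypergeomWeight N k n (numTrue σ) = 1 := by
  induction n with
  | zero => simp [numTrue, hypergeomWeight_zero_zero hk]
  | succ n ih =>
    rw [sum_fin_succ_pi]
    simp only [numTrue_cons, hypergeomWeight_succ_add (by omega : n < N), ← mul_sum,
      sum_bernoulliWeight, mul_one]
    exact ih (by omega)

lemma ConvexOn.map_drawProb_le {g : ℝ → ℝ} (hg : ConvexOn ℝ (Set.Icc 0 1) g) {n t : ℕ}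
    (hn : n + 1 < N) (h : hypergeomWeight N k n t ≠ 0) :
    g (drawProb N k n t) ≤
      ∑ b, bernoulliWeight (drawProb N k n t) b * g (drawProb N k (n + 1) (t + b.toNat)) := by
  obtain ⟨-, hRM⟩ := le_of_hypergeomWeight_ne_zero h
  have hM : 2 ≤ N - n := by omega
  simp only [Fintype.sum_bool, bernoulliWeight, drawProb, Bool.toNat_true, Bool.toNat_false,
    if_true, Bool.false_eq_true, if_false, ← Nat.sub_sub]
  generalize k - t = R at *
  generalize N - n = M at *
  rcases Nat.eq_zero_or_pos R with rfl | hR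
  · simp
  rcases hRM.eq_or_lt with rfl | hRM
  · have : (R : ℝ) - 1 ≠ 0 := by
      rw [sub_ne_zero]; exact_mod_cast (by omega : R ≠ 1)
    have : (R : ℝ) ≠ 0 := by exact_mod_cast (by omega : R ≠ 0)
    simp [*]
  push_cast [Nat.cast_sub (by omega : 1 ≤ R), Nat.cast_sub (by omega : 1 ≤ M)]
  have hR1 : (1 : ℝ) ≤ R := by exact_mod_cast hR
  have hRM' : (R : ℝ) + 1 ≤ M := by exact_mod_cast hRM
  have hM1 : (0 : ℝ) < M - 1 := by linarith
  have key : g (R / M * ((R - 1) / (M - 1)) + (1 - R / M) * (R / (M - 1))) ≤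
      R / M * g ((R - 1) / (M - 1)) + (1 - R / M) * g (R / (M - 1)) :=
    hg.2 ⟨div_nonneg (by linarith) hM1.le, (div_le_one hM1).2 (by linarith)⟩
      ⟨div_nonneg (by linarith) hM1.le, (div_le_one hM1).2 (by linarith)⟩
      (div_nonneg (by linarith) (by linarith))
      (sub_nonneg.2 ((div_le_one (by linarith)).2 (by linarith))) (add_sub_cancel _ _)
  -- the conditional probability of drawing a `true` is a martingale
  have hmart : R / M * ((R - 1) / (M - 1)) + (1 - R / M) * (R / (M - 1)) = (R / M : ℝ) := by
    field_simp
    ring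
  rwa [hmart] at key

lemma drawExpectation_le_succ {g : ℝ → ℝ} (hg : ConvexOn ℝ (Set.Icc 0 1) g) {n : ℕ}
    (hn : n + 1 < N) : drawExpectation N k g n ≤ drawExpectation N k g (n + 1) := by
  rw [drawExpectation, drawExpectation, sum_fin_succ_pi]
  refine sum_le_sum fun σ _ => ?_
  simp only [numTrue_cons, hypergeomWeight_succ_add (by omega : n < N), mul_assoc, ← mul_sum]
  by_cases h : hypergeomWeight N k n (numTrue σ) = 0
  · simp [h]
  exact mul_le_mul_of_nonneg_left (hg.map_drawProb_le hn h) (hypergeomWeight_nonneg _ _)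

lemma marginalKL_zero (hk : k ≤ N) (w : Bool → ℝ) : marginalKL N k w 0 = 0 := by
  simp [marginalKL, relEntropy, numTrue, productWeight, hypergeomWeight_zero_zero hk]

lemma marginalKL_succ {w : Bool → ℝ} (hw : ∀ b, 0 < w b) {n : ℕ} (hn : n < N) :
    marginalKL N k w (n + 1) =
      marginalKL N k w n + drawExpectation N k (fun x => relEntropy (bernoulliWeight x) w) n := by
  refine relEntropy_fin_succ (fun b σ => by rw [numTrue_cons, hypergeomWeight_succ_add hn])
    (fun b σ => by rw [productWeight_cons, mul_comm]) (fun σ => hypergeomWeight_nonneg _ _)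
    (fun σ h b => ?_) (fun σ => sum_bernoulliWeight _) (productWeight_pos hw) hw
  have := drawProb_mem_Icc h
  cases b <;> simp [bernoulliWeight, this.1, this.2]

lemma marginalKL_eq_sum {w : Bool → ℝ} (hk : k ≤ N) (hw : ∀ b, 0 < w b) {n : ℕ} (hn : n ≤ N) :
    marginalKL N k w n =
      ∑ j ∈ range n, drawExpectation N k (fun x => relEntropy (bernoulliWeight x) w) j := by
  induction n with
  | zero => simp [marginalKL_zero hk]
  | succ n ih => rw [marginalKL_succ hw (by omega), ih (by omega), sum_range_succ]

theorem marginalKL_le {w : Bool → ℝ} (hk : k ≤ N) (hw : ∀ b, 0 < w b) {n : ℕ} (hn : n ≤ N) :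
    marginalKL N k w n ≤ n * (marginalKL N k w N / N) := by
  rw [marginalKL_eq_sum hk hw hn, marginalKL_eq_sum hk hw le_rfl]
  refine sum_range_le_mul_sum_range_div (monotoneOn_of_le_add_one Set.ordConnected_Iio
    fun j _ _ hj => drawExpectation_le_succ (convexOn_relEntropy_bernoulliWeight hw) hj) hn

end Hypergeometric

section Ensembles

variable {N : ℕ}

lemma mag_eq (φ : Fin N → Bool) : mag φ = 2 * numTrue φ - N := by
  have h : ∀ b : Bool, (if b then (1 : ℝ) else -1) = 2 * b.toNat - 1 := by
    intro b; cases b <;> norm_num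
  simp only [mag, h, sum_sub_distrib, ← mul_sum, numTrue_eq_sum, Nat.cast_sum]
  simp

lemma magSet_eq_filter {m : ℝ} {ψ : Fin N → Bool} (hψ : mag ψ / N = m) :
    magSet N m = ({φ | numTrue φ = numTrue ψ} : Finset (Fin N → Bool)) := by
  ext φ
  simp only [magSet, mem_filter, mem_univ, true_and, ← hψ]
  -- for `N = 0` the division by `N` is junk, but then there is only one configuration
  rcases N.eq_zero_or_pos with rfl | hN
  · simp [Subsingleton.elim φ ψ]
  rw [div_left_inj' (by positivity), mag_eq, mag_eq]
  constructor
  · intro h; exact_mod_cast (by linarith : (numTrue φ : ℝ) = numTrue ψ)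
  · intro h; rw [h]

lemma card_filter_add_numTrue_eq {β : Type*} [Fintype β] [DecidableEq β] (t k : ℕ) :
    #{v : β → Bool | t + numTrue v = k} =
      if t ≤ k then (Fintype.card β).choose (k - t) else 0 := by
  split_ifs with ht
  · rw [← card_filter_numTrue_eq]
    congr 1; ext v; simp only [mem_filter, mem_univ, true_and]; omega
  · rw [card_eq_zero, filter_eq_empty_iff]
    intro v _; omega

theorem mcExp_projB {m : ℝ} {ψ : Fin N → Bool} (hψ : mag ψ / N = m) (I : Finset (Fin N))
    (f : (Fin #I → Bool) → ℝ) :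
    mcExp N m (fun φ => f (projB I rfl φ)) =
      ∑ σ, hypergeomWeight N (numTrue ψ) #I (numTrue σ) * f σ := by
  rw [mcExp, magSet_eq_filter hψ, card_filter_numTrue_eq, Fintype.card_fin, sum_filter,
    ← (splitEquiv I).symm.sum_comp, Fintype.sum_prod_type, sum_div]
  refine sum_congr rfl fun σ _ => ?_
  simp only [numTrue_splitEquiv_symm, projB_splitEquiv_symm]
  rw [← sum_filter, sum_const, card_filter_add_numTrue_eq, nsmul_eq_mul, hypergeomWeight]
  have : Fintype.card {x // x ∉ I} = N - #I := by simp [Fintype.card_subtype_compl]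
  split_ifs <;> simp [this, mul_div_assoc, mul_comm]

noncomputable def spinWeight (μ : ℝ) (b : Bool) : ℝ :=
  exp (-μ * if b then 1 else -1) / ∑ b' : Bool, exp (-μ * if b' then 1 else -1)

lemma spinWeight_pos (μ : ℝ) (b : Bool) : 0 < spinWeight μ b := by
  unfold spinWeight; positivity

lemma sum_spinWeight (μ : ℝ) : ∑ b, spinWeight μ b = 1 := by
  unfold spinWeight
  rw [← sum_div, div_self (by positivity)]

lemma exp_neg_mul_mag_div_Zcan (μ : ℝ) (φ : Fin N → Bool) :
    exp (-μ * mag φ) / Zcan N μ = productWeight (spinWeight μ) φ := by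
  have hexp : ∀ ψ : Fin N → Bool,
      exp (-μ * mag ψ) = productWeight (fun b => exp (-μ * if b then 1 else -1)) ψ := by
    intro ψ; rw [mag, mul_sum, exp_sum]; rfl
  rw [Zcan, sum_congr rfl fun ψ _ => hexp ψ, sum_productWeight, Fintype.card_fin, hexp]
  simp only [productWeight, spinWeight, prod_div_distrib, prod_const, card_univ, Fintype.card_fin]

theorem canExp_projB (μ : ℝ) (I : Finset (Fin N)) (f : (Fin #I → Bool) → ℝ) :
    canExp N μ (fun φ => f (projB I rfl φ)) = ∑ σ, productWeight (spinWeight μ) σ * f σ := by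
  simp only [canExp, sum_div, mul_div_right_comm, exp_neg_mul_mag_div_Zcan]
  rw [← (splitEquiv I).symm.sum_comp, Fintype.sum_prod_type]
  refine sum_congr rfl fun σ _ => ?_
  simp only [productWeight_splitEquiv_symm, projB_splitEquiv_symm, mul_right_comm _ _ (f σ),
    ← mul_sum, sum_productWeight, sum_spinWeight, one_pow, mul_one]

theorem relEnt_eq_marginalKL {m : ℝ} {ψ : Fin N → Bool} (hψ : mag ψ / N = m) (μ : ℝ) :
    relEnt N m μ = marginalKL N (numTrue ψ) (spinWeight μ) N := by
  rw [relEnt, magSet_eq_filter hψ, card_filter_numTrue_eq, Fintype.card_fin, sum_filter,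
    marginalKL, relEntropy]
  refine sum_congr rfl fun φ _ => ?_
  rw [hypergeomWeight_self, exp_neg_mul_mag_div_Zcan]
  split_ifs <;> simp

end Ensembles

lemma abs_sum_mul_sub_sum_mul_le {ι : Type*} [Fintype ι] [Nonempty ι] (f a b : ι → ℝ) :
    |∑ i, a i * f i - ∑ i, b i * f i| ≤
      (univ.sup' univ_nonempty fun i => |f i|) * ∑ i, |a i - b i| := by
  rw [← sum_sub_distrib, mul_sum]
  refine (abs_sum_le_sum_abs _ _).trans (sum_le_sum fun i _ => ?_)
  rw [← sub_mul, abs_mul, mul_comm]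
  exact mul_le_mul_of_nonneg_right (le_sup' (fun i => |f i|) (mem_univ i)) (abs_nonneg _)

theorem stmt6_general (N : ℕ) (m : ℝ)
    (hm : ∃ φ : Fin N → Bool, mag φ / N = m)
    (μ : ℝ) (I : Finset (Fin N))
    (f : (Fin I.card → Bool) → ℝ) :
    |mcExp N m (fun φ => f (projB I rfl φ)) - canExp N μ (fun φ => f (projB I rfl φ))| ^ 2 / 2 ≤
      (I.card : ℝ) * (Finset.univ.sup' Finset.univ_nonempty fun σ : Fin I.card → Bool => |f σ|) ^ 2 *
        (relEnt N m μ / N) := by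
  obtain ⟨ψ, hψ⟩ := hm
  have hk : numTrue ψ ≤ N := by simpa using numTrue_le ψ
  have hn : #I ≤ N := by simpa using card_le_univ I
  set F := univ.sup' univ_nonempty fun σ : Fin #I → Bool => |f σ|
  set a : (Fin #I → Bool) → ℝ := fun σ => hypergeomWeight N (numTrue ψ) #I (numTrue σ)
  set b : (Fin #I → Bool) → ℝ := productWeight (spinWeight μ)
  have hTV : |mcExp N m (fun φ => f (projB I rfl φ)) - canExp N μ (fun φ => f (projB I rfl φ))| ≤
      F * ∑ σ, |a σ - b σ| := by
    rw [mcExp_projB hψ, canExp_projB]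
    exact abs_sum_mul_sub_sum_mul_le f a b
  have hPinsker : (∑ σ, |a σ - b σ|) ^ 2 ≤ 2 * marginalKL N (numTrue ψ) (spinWeight μ) #I :=
    sq_sum_abs_sub_le_two_mul_relEntropy (fun σ => hypergeomWeight_nonneg _ _)
      (productWeight_pos (spinWeight_pos μ)) (sum_hypergeomWeight hk hn)
      (by rw [sum_productWeight, sum_spinWeight, one_pow])
  have hD : marginalKL N (numTrue ψ) (spinWeight μ) #I ≤ #I * (relEnt N m μ / N) :=
    relEnt_eq_marginalKL hψ μ ▸ marginalKL_le hk (spinWeight_pos μ) hn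
  calc _ ≤ (F * ∑ σ, |a σ - b σ|) ^ 2 / 2 := by gcongr
    _ = F ^ 2 * ((∑ σ, |a σ - b σ|) ^ 2 / 2) := by ring
    _ ≤ F ^ 2 * marginalKL N (numTrue ψ) (spinWeight μ) #I := by gcongr; linarith
    _ ≤ F ^ 2 * (#I * (relEnt N m μ / N)) := by gcongr
    _ = _ := by ring

theorem stmt6 (N : ℕ) (m : ℝ)
    (hm : ∃ φ : Fin N → Bool, mag φ / N = m) (hm₁ : m ≠ -1) (hm₂ : m ≠ 1)
    (μ : ℝ) (I : Finset (Fin N)) (hI : I.Nonempty)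
    (f : (Fin I.card → Bool) → ℝ) :
    |mcExp N m (fun φ => f (projB I rfl φ)) - canExp N μ (fun φ => f (projB I rfl φ))| ^ 2 / 2 ≤
      (I.card : ℝ) * (Finset.univ.sup' Finset.univ_nonempty fun σ : Fin I.card → Bool => |f σ|) ^ 2 *
        (relEnt N m μ / N) :=
  stmt6_general N m hm μ I f
end
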